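/- arXiv:2011.07838 — 7 statements merged into one kernel-verified Lean document; each statement's English description precedes it below -/
import Mathlib

section
/- Let f be a nonerasing endomorphism of the free monoid over a finite alphabet A. A right-infinite word w over A can be indefinitely desubstituted by f (i.e., there exists a sequence (w_n) of infinite words with w_0 = w and w_n = f(w_{n+1}) for all n ≥ 0) if and only if w is a fixed point of f^n for some integer n ≥ 1. -/
universe u
variable {A : Type u}

/-- Apply a substitution (given by images of letters) to a finite word. -/
def applyList (f : A → List A) (u : List A) : List A := u.flatMap f

/-- Starting position of the image of the `n`-th letter of `v` inside `f(v)`. -/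
def blockStart (f : A → List A) (v : ℕ → A) : ℕ → ℕ
  | 0 => 0
  | n + 1 => blockStart f v n + (f (v n)).length

/-- `ApplyEq f v u` means `u = f(v)` for right-infinite words. -/
def ApplyEq (f : A → List A) (v u : ℕ → A) : Prop :=
  ∀ (n i : ℕ) (h : i < (f (v n)).length),
    u (blockStart f v n + i) = (f (v n))[i]

/-- `u` occurs as a factor of `w` at position `k`. -/
def FactorAt (w : ℕ → A) (u : List A) (k : ℕ) : Prop :=
  ∀ (i : ℕ) (h : i < u.length), u[i] = w (k + i)

def Factor (w : ℕ → A) (u : List A) : Prop := ∃ k, FactorAt w u k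

/-- `u` is a prefix of the infinite word `w`. -/
def PrefixOf (u : List A) (w : ℕ → A) : Prop :=
  ∀ (i : ℕ) (h : i < u.length), u[i] = w i

/-- Membership in the stable set of a set `S` of substitutions. -/
def InStable (S : Set (A → List A)) (w : ℕ → A) : Prop :=
  ∃ (σ : ℕ → A → List A) (ws : ℕ → ℕ → A),
    (∀ n, σ n ∈ S) ∧ ws 0 = w ∧ ∀ n, ApplyEq (σ n) (ws (n + 1)) (ws n)

/-- Composition `σ_1 ∘ ⋯ ∘ σ_n` of the first `n` substitutions of `s` (0-indexed). -/
def compSeq (s : ℕ → A → List A) : ℕ → A → List A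
  | 0 => fun a => [a]
  | n + 1 => fun a => applyList (compSeq s n) (s n a)

/-- `w` is S-adic with directive sequence `σ`. -/
def SAdicWith (σ : ℕ → A → List A) (w : ℕ → A) : Prop :=
  ∃ a : ℕ → A, (∀ n, PrefixOf (compSeq σ n (a n)) w) ∧
    ∀ N : ℕ, ∃ n, N ≤ (compSeq σ n (a n)).length


/-!
Let `w = fⁿ(wₙ)` for all `n`. If some `wₘ` contains a letter `c` whose images `fᵏ(c)` are
unbounded, pick `ℓ` beyond its position. The prefixes `wₙ[0,ℓ)` satisfy `wₙ[0,ℓ) = Φ(wₙ₊₁[0,ℓ))`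
for a map `Φ` of a finite set, hence are periodic in `n`, say with period `e`. Then the words
`f^(m+je)(wₘ[0,ℓ))` are prefixes of `w` of unbounded length, and `f^e` maps each to the next, so
`f^e(w) = w`. If instead all letters of all `wₙ` are bounded, the restrictions of the powers of `f`
to bounded letters take finitely many values, so `fᵏ = fˡ` on them for some `k < l`, and `f^(l-k)`
fixes every prefix `fᵏ(wₖ[0,n))` of `w`. Conversely, a fixed point of `f^p` is desubstituted by
the sequence `w, f^(p-1)(w), f^(2(p-1))(w), …`.
-/

def prefixList (v : ℕ → A) (n : ℕ) : List A := List.ofFn fun i : Fin n => v i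

@[simp] lemma length_prefixList (v : ℕ → A) (n : ℕ) : (prefixList v n).length = n :=
  List.length_ofFn

@[simp] lemma getElem_prefixList (v : ℕ → A) (n i : ℕ) (h : i < (prefixList v n).length) :
    (prefixList v n)[i] = v i :=
  List.getElem_ofFn ..

@[simp] lemma prefixList_zero (v : ℕ → A) : prefixList v 0 = [] :=
  List.ofFn_zero

lemma mem_prefixList {v : ℕ → A} {n : ℕ} {a : A} (h : a ∈ prefixList v n) : ∃ i, v i = a := by
  obtain ⟨i, rfl⟩ := List.mem_ofFn.1 h
  exact ⟨i, rfl⟩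

lemma prefixList_succ (v : ℕ → A) (n : ℕ) : prefixList v (n + 1) = prefixList v n ++ [v n] := by
  rw [prefixList, List.ofFn_succ', List.concat_eq_append]
  rfl

lemma prefixOf_prefixList (v : ℕ → A) (n : ℕ) : PrefixOf (prefixList v n) v :=
  fun i _ => getElem_prefixList v n i _

lemma PrefixOf.eq_prefixList {x : List A} {v : ℕ → A} (hx : PrefixOf x v) :
    x = prefixList v x.length :=
  List.ext_getElem (by simp) fun i hi _ => by rw [hx, getElem_prefixList]

lemma PrefixOf.of_isPrefix {x y : List A} {v : ℕ → A} (hxy : x <+: y) (hy : PrefixOf y v) :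
    PrefixOf x v := fun i h => by rw [hxy.getElem h, hy]

lemma PrefixOf.isPrefix_of_length_le {x y : List A} {v : ℕ → A} (hx : PrefixOf x v)
    (hy : PrefixOf y v) (hlen : x.length ≤ y.length) : x <+: y := by
  rw [List.prefix_iff_eq_take]
  refine List.ext_getElem (by simp [hlen]) fun i hi _ => ?_
  rw [List.getElem_take, hx, hy]

lemma prefixList_isPrefix (v : ℕ → A) {m n : ℕ} (h : m ≤ n) : prefixList v m <+: prefixList v n :=
  (prefixOf_prefixList v m).isPrefix_of_length_le (prefixOf_prefixList v n) (by simpa using h)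

section applyList

variable {g : A → List A}

@[simp] lemma applyList_nil : applyList g [] = [] := rfl

@[simp] lemma applyList_append (x y : List A) :
    applyList g (x ++ y) = applyList g x ++ applyList g y :=
  List.flatMap_append

@[simp] lemma applyList_singleton (a : A) : applyList g [a] = g a := by
  simp [applyList]

lemma applyList_congr {g' : A → List A} {x : List A} (h : ∀ a ∈ x, g a = g' a) :
    applyList g x = applyList g' x :=
  List.flatMap_congr h

lemma applyList_applyList (h : A → List A) (x : List A) :
    applyList h (applyList g x) = applyList (fun a => applyList h (g a)) x :=
  List.flatMap_assoc

lemma List.IsPrefix.applyList {x y : List A} (hxy : x <+: y) :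
    _root_.applyList g x <+: _root_.applyList g y := by
  obtain ⟨t, rfl⟩ := hxy
  simp

lemma length_le_length_applyList_of_mem {x : List A} {a : A} (ha : a ∈ x) :
    (g a).length ≤ (applyList g x).length := by
  rw [applyList, List.length_flatMap]
  exact List.le_sum_of_mem (List.mem_map_of_mem ha)

lemma length_le_length_applyList (hg : ∀ a, g a ≠ []) (x : List A) :
    x.length ≤ (applyList g x).length := by
  induction x with
  | nil => simp
  | cons a x ih =>
    have : 1 ≤ (g a).length := List.length_pos_iff.2 (hg a)
    rw [List.length_cons, ← List.singleton_append, applyList_append, applyList_singleton,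
      List.length_append]
    omega

end applyList

section ApplyEq

variable {g h : A → List A} {v t u : ℕ → A}

lemma blockStart_eq_length_applyList (g : A → List A) (v : ℕ → A) (n : ℕ) :
    blockStart g v n = (applyList g (prefixList v n)).length := by
  induction n with
  | zero => rfl
  | succ n ih => simp [blockStart, prefixList_succ, ih]

lemma applyList_prefixList_succ (g : A → List A) (v : ℕ → A) (n : ℕ) :
    applyList g (prefixList v (n + 1)) = applyList g (prefixList v n) ++ g (v n) := by
  rw [prefixList_succ, applyList_append, applyList_singleton]

theorem applyEq_iff_forall_prefixOf :
    ApplyEq g v u ↔ ∀ n, PrefixOf (applyList g (prefixList v n)) u := by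
  simp only [ApplyEq, PrefixOf, blockStart_eq_length_applyList]
  constructor
  · intro hg n
    induction n with
    | zero => simp
    | succ n ih =>
      intro i hi
      simp only [applyList_prefixList_succ, List.length_append] at hi ⊢
      by_cases hin : i < (applyList g (prefixList v n)).length
      · rw [List.getElem_append_left hin, ih]
      · rw [List.getElem_append_right (by omega), ← hg n _ (by omega)]
        congr
        omega
  · intro hg n i hi
    have := hg (n + 1) ((applyList g (prefixList v n)).length + i)
      (by simp [applyList_prefixList_succ, hi])
    simp only [applyList_prefixList_succ, List.getElem_append_right (Nat.le_add_right _ _),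
      Nat.add_sub_cancel_left] at this
    exact this.symm

lemma ApplyEq.prefixOf_applyList (hg : ApplyEq g v u) {x : List A} (hx : PrefixOf x v) :
    PrefixOf (applyList g x) u := by
  rw [PrefixOf.eq_prefixList hx]
  exact applyEq_iff_forall_prefixOf.1 hg _

lemma applyEq_of_forall_exists_prefixOf
    (hg : ∀ n, ∃ x, PrefixOf x v ∧ n ≤ x.length ∧ PrefixOf (applyList g x) u) :
    ApplyEq g v u := by
  refine applyEq_iff_forall_prefixOf.2 fun n => ?_
  obtain ⟨x, hxv, hnx, hgx⟩ := hg n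
  have : prefixList v n <+: x :=
    (prefixOf_prefixList v n).isPrefix_of_length_le hxv (by simpa using hnx)
  exact hgx.of_isPrefix this.applyList

lemma ApplyEq.comp (hg : ApplyEq g v t) (hh : ApplyEq h t u) :
    ApplyEq (fun a => applyList h (g a)) v u :=
  applyEq_iff_forall_prefixOf.2 fun n => by
    rw [← applyList_applyList]
    exact hh.prefixOf_applyList (applyEq_iff_forall_prefixOf.1 hg n)

end ApplyEq

section substWord

variable {g : A → List A} {v u : ℕ → A}

/-- The image `g(v)` of an infinite word; the fallback letter `v 0` of `getD` is never reached
when `g` is nonerasing. -/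
def substWord (g : A → List A) (v : ℕ → A) : ℕ → A :=
  fun i => (applyList g (prefixList v (i + 1))).getD i (v 0)

lemma lt_length_applyList_prefixList (hg : ∀ a, g a ≠ []) (v : ℕ → A) (i : ℕ) :
    i < (applyList g (prefixList v (i + 1))).length :=
  lt_of_lt_of_le (by simp) (length_le_length_applyList hg _)

theorem applyEq_substWord (hg : ∀ a, g a ≠ []) : ApplyEq g v (substWord g v) := by
  refine applyEq_iff_forall_prefixOf.2 fun n i hi => ?_
  have hn : applyList g (prefixList v n) <+: applyList g (prefixList v (n + i + 1)) :=
    (prefixList_isPrefix v (by omega)).applyList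
  have hi' : applyList g (prefixList v (i + 1)) <+: applyList g (prefixList v (n + i + 1)) :=
    (prefixList_isPrefix v (by omega)).applyList
  have hlen := lt_length_applyList_prefixList hg v i
  rw [substWord, List.getD_eq_getElem _ _ hlen, hn.getElem, hi'.getElem]

theorem ApplyEq.eq_substWord (hg : ∀ a, g a ≠ []) (h : ApplyEq g v u) : u = substWord g v := by
  funext i
  have hlen := lt_length_applyList_prefixList hg v i
  rw [substWord, List.getD_eq_getElem _ _ hlen]
  exact (applyEq_iff_forall_prefixOf.1 h (i + 1) i hlen).symm

end substWord

section substPow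

variable (f : A → List A)

abbrev substPow (n : ℕ) : A → List A := compSeq (fun _ => f) n

lemma applyList_substPow_zero (x : List A) : applyList (substPow f 0) x = x :=
  List.flatMap_singleton' x

lemma applyList_substPow_add (m n : ℕ) (x : List A) :
    applyList (substPow f (m + n)) x = applyList (substPow f m) (applyList (substPow f n) x) := by
  induction n generalizing x with
  | zero => rw [applyList_substPow_zero]; rfl
  | succ n ih =>
    calc applyList (substPow f (m + n + 1)) x
        = applyList (substPow f (m + n)) (applyList f x) := (applyList_applyList _ _).symm
      _ = applyList (substPow f m) (applyList (substPow f n) (applyList f x)) := ih _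
      _ = _ := congrArg _ (applyList_applyList _ _)

variable {f}

lemma substPow_ne_nil (hf : ∀ a, f a ≠ []) (n : ℕ) (a : A) : substPow f n a ≠ [] := by
  induction n generalizing a with
  | zero => exact List.cons_ne_nil _ _
  | succ n ih =>
    refine List.ne_nil_of_length_pos (lt_of_lt_of_le ?_ (length_le_length_applyList ih (f a)))
    exact List.length_pos_iff.2 (hf a)

lemma length_substPow_mono (hf : ∀ a, f a ≠ []) (a : A) :
    Monotone fun k => (substPow f k a).length := by
  refine monotone_nat_of_le_succ fun k => ?_
  have := applyList_substPow_add f 1 k [a]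
  rw [applyList_singleton, applyList_singleton, Nat.add_comm] at this
  rw [this]
  exact length_le_length_applyList (substPow_ne_nil hf 1) _

lemma applyEq_substPow_zero (v : ℕ → A) : ApplyEq (substPow f 0) v v :=
  applyEq_iff_forall_prefixOf.2 fun n => by
    rw [applyList_substPow_zero]
    exact prefixOf_prefixList v n

lemma applyEq_substPow_of_desubst {ws : ℕ → ℕ → A} (hws : ∀ n, ApplyEq f (ws (n + 1)) (ws n))
    (n : ℕ) : ApplyEq (substPow f n) (ws n) (ws 0) := by
  induction n with
  | zero => exact applyEq_substPow_zero _
  | succ n ih => exact (hws n).comp ih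

lemma applyEq_substPow_iterate_substWord (hf : ∀ a, f a ≠ []) (n : ℕ) (v : ℕ → A) :
    ApplyEq (substPow f n) v ((substWord f)^[n] v) := by
  induction n generalizing v with
  | zero => exact applyEq_substPow_zero v
  | succ n ih => exact (applyEq_substWord hf).comp (ih _)

end substPow

theorem exists_periodic_of_eq_apply_succ {S : Type*} [Finite S] {Φ : S → S} {x : ℕ → S}
    (hx : ∀ m, x m = Φ (x (m + 1))) : ∃ d, 0 < d ∧ Function.Periodic x d := by
  have hiter : ∀ m n, x m = Φ^[n] (x (m + n)) := by
    intro m n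
    induction n with
    | zero => rfl
    | succ n ih => rw [ih, hx (m + n)]; rfl
  obtain ⟨a, b, hab, heq⟩ := Set.finite_univ.exists_lt_map_eq_of_forall_mem
    (f := fun n => Φ^[n]) fun _ => Set.mem_univ _
  refine ⟨b - a, by omega, fun m => ?_⟩
  calc x (m + (b - a)) = Φ^[a] (x (m + (b - a) + a)) := hiter _ _
    _ = Φ^[b] (x (m + b)) := by rw [congrFun heq, show m + (b - a) + a = m + b by omega]
    _ = x m := (hiter m b).symm

section Desubstitution

variable {f : A → List A} {ws : ℕ → ℕ → A}

def IsBoundedLetter (f : A → List A) (a : A) : Prop := ∃ C, ∀ k, (substPow f k a).length ≤ C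

theorem exists_lt_substPow_eq_of_isBoundedLetter [Finite A] (f : A → List A) :
    ∃ k l, k < l ∧ ∀ a, IsBoundedLetter f a → substPow f l a = substPow f k a := by
  choose C hC using fun a : {a // IsBoundedLetter f a} => a.2
  obtain ⟨k, l, hkl, heq⟩ := Set.Finite.exists_lt_map_eq_of_forall_mem
    (f := fun k (a : {a // IsBoundedLetter f a}) => substPow f k a)
    (t := {φ | ∀ a, φ a ∈ {x : List A | x.length ≤ C a}}) (fun k a => hC a k)
    (Set.Finite.pi' fun a => List.finite_length_le A (C a))
  exact ⟨k, l, hkl, fun a ha => (congrFun heq ⟨a, ha⟩).symm⟩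

theorem exists_periodic_prefixList [Finite A] (hf : ∀ a, f a ≠ [])
    (hws : ∀ n, ApplyEq f (ws (n + 1)) (ws n)) (ℓ : ℕ) :
    ∃ e, 0 < e ∧ Function.Periodic (fun n => prefixList (ws n) ℓ) e := by
  let Φ : (Fin ℓ → A) → Fin ℓ → A := fun y i => (applyList f (List.ofFn y)).getD i (y i)
  obtain ⟨e, he, hper⟩ := exists_periodic_of_eq_apply_succ (Φ := Φ)
    (x := fun n (i : Fin ℓ) => ws n i) fun n => funext fun i => by
      have hlen : (i : ℕ) < (applyList f (prefixList (ws (n + 1)) ℓ)).length :=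
        lt_of_lt_of_le (by simp) (length_le_length_applyList hf _)
      change ws n i = (applyList f (prefixList (ws (n + 1)) ℓ)).getD i (ws (n + 1) i)
      rw [List.getD_eq_getElem _ _ hlen]
      exact ((hws n).prefixOf_applyList (prefixOf_prefixList _ ℓ) i hlen).symm
  exact ⟨e, he, hper.comp List.ofFn⟩

theorem exists_applyEq_substPow_self_of_forall_isBoundedLetter [Finite A]
    (hf : ∀ a, f a ≠ []) (hws : ∀ n, ApplyEq f (ws (n + 1)) (ws n))
    (hb : ∀ n i, IsBoundedLetter f (ws n i)) :
    ∃ p, 0 < p ∧ ApplyEq (substPow f p) (ws 0) (ws 0) := by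
  obtain ⟨k, l, hkl, heq⟩ := exists_lt_substPow_eq_of_isBoundedLetter f
  have hpre : ∀ n, PrefixOf (applyList (substPow f k) (prefixList (ws k) n)) (ws 0) := fun n =>
    (applyEq_substPow_of_desubst hws k).prefixOf_applyList (prefixOf_prefixList _ n)
  refine ⟨l - k, by omega, applyEq_of_forall_exists_prefixOf fun n => ⟨_, hpre n, ?_, ?_⟩⟩
  · simpa using length_le_length_applyList (substPow_ne_nil hf k) (prefixList (ws k) n)
  · rw [← applyList_substPow_add, Nat.sub_add_cancel hkl.le, applyList_congr fun a ha => ?_]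
    · exact hpre n
    · obtain ⟨i, rfl⟩ := mem_prefixList ha
      exact heq _ (hb k i)

theorem exists_applyEq_substPow_self_of_not_isBoundedLetter [Finite A]
    (hf : ∀ a, f a ≠ []) (hws : ∀ n, ApplyEq f (ws (n + 1)) (ws n)) {m i : ℕ}
    (hmi : ¬ IsBoundedLetter f (ws m i)) :
    ∃ p, 0 < p ∧ ApplyEq (substPow f p) (ws 0) (ws 0) := by
  obtain ⟨e, he, hper⟩ := exists_periodic_prefixList hf hws (i + 1)
  set L := prefixList (ws m) (i + 1)
  have hL : ∀ j, PrefixOf (applyList (substPow f (m + j * e)) L) (ws 0) := fun j => by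
    have hwin : prefixList (ws (m + j * e)) (i + 1) = L := hper.nat_mul j m
    rw [← hwin]
    exact (applyEq_substPow_of_desubst hws _).prefixOf_applyList (prefixOf_prefixList _ _)
  have hmemL : ws m i ∈ L := List.mem_ofFn.2 ⟨⟨i, by omega⟩, rfl⟩
  refine ⟨e, he, applyEq_of_forall_exists_prefixOf fun n => ?_⟩
  obtain ⟨k, hk⟩ : ∃ k, n < (substPow f k (ws m i)).length := by
    simp only [IsBoundedLetter, not_exists, not_forall, not_le] at hmi
    exact hmi n
  refine ⟨_, hL k, ?_, ?_⟩
  · calc n ≤ (substPow f k (ws m i)).length := hk.le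
      _ ≤ (substPow f (m + k * e) (ws m i)).length :=
        length_substPow_mono hf _ (le_add_left (Nat.le_mul_of_pos_right k he))
      _ ≤ _ := length_le_length_applyList_of_mem hmemL
  · rw [← applyList_substPow_add, show e + (m + k * e) = m + (k + 1) * e by ring]
    exact hL (k + 1)

theorem exists_applyEq_substPow_self_of_desubst [Finite A] (hf : ∀ a, f a ≠ [])
    (hws : ∀ n, ApplyEq f (ws (n + 1)) (ws n)) :
    ∃ p, 0 < p ∧ ApplyEq (substPow f p) (ws 0) (ws 0) := by
  by_cases hb : ∀ n i, IsBoundedLetter f (ws n i)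
  · exact exists_applyEq_substPow_self_of_forall_isBoundedLetter hf hws hb
  · simp only [not_forall] at hb
    obtain ⟨m, i, hmi⟩ := hb
    exact exists_applyEq_substPow_self_of_not_isBoundedLetter hf hws hmi

theorem exists_desubst_of_applyEq_substPow_self (hf : ∀ a, f a ≠ []) {p : ℕ} (hp : 0 < p)
    {w : ℕ → A} (hw : ApplyEq (substPow f p) w w) :
    ∃ ws : ℕ → ℕ → A, ws 0 = w ∧ ∀ n, ApplyEq f (ws (n + 1)) (ws n) := by
  obtain ⟨q, rfl⟩ : ∃ q, p = q + 1 := ⟨p - 1, by omega⟩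
  have hfix : (substWord f)^[q + 1] w = w :=
    ((applyEq_substPow_iterate_substWord hf _ w).eq_substWord (substPow_ne_nil hf _)).trans
      (hw.eq_substWord (substPow_ne_nil hf _)).symm
  refine ⟨fun n => (substWord f)^[q * n] w, rfl, fun n => ?_⟩
  have hstep : substWord f ((substWord f)^[q * (n + 1)] w) = (substWord f)^[q * n] w := by
    rw [← Function.iterate_succ_apply' (substWord f), Nat.succ_eq_add_one,
      show q * (n + 1) + 1 = q * n + (q + 1) by ring, Function.iterate_add_apply, hfix]
  dsimp only
  rw [← hstep]
  exact applyEq_substWord hf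

end Desubstitution

/-- an infinite word can be indefinitely desubstituted by a nonerasing
endomorphism `f` iff it is a fixed point of `f^n` for some `n ≥ 1`. -/
theorem stmt0 {A : Type u} [Fintype A] (f : A → List A) (hf : ∀ a, f a ≠ [])
    (w : ℕ → A) :
    (∃ ws : ℕ → ℕ → A, ws 0 = w ∧ ∀ n, ApplyEq f (ws (n + 1)) (ws n)) ↔
      ∃ n : ℕ, 1 ≤ n ∧ ApplyEq (compSeq (fun _ => f) n) w w := by
  constructor
  · rintro ⟨ws, rfl, hws⟩
    exact exists_applyEq_substPow_self_of_desubst hf hws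
  · rintro ⟨n, hn, hw⟩
    exact exists_desubst_of_applyEq_substPow_self hf hn hw
end

section
/- Let S be a set of substitutions over a finite alphabet A. Then any infinite sequence (σ_n)_{n≥1} of elements of S is the directive sequence of at least one infinite word; that is, there exists an infinite word w and a sequence of infinite words (w_n)_{n≥0} with w_0 = w and w_n = σ_{n+1}(w_{n+1}) for all n ≥ 0. -/
universe u
variable {A : Type u}

/-- first `k` letters of an infinite word. -/
def takeWord (v : ℕ → A) : ℕ → List A
  | 0 => []
  | k + 1 => takeWord v k ++ [v k]

lemma applyList_append_s2 (f : A → List A) (l l' : List A) :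
    applyList f (l ++ l') = applyList f l ++ applyList f l' := by
  simp [applyList]

lemma applyList_take_length (f : A → List A) (v : ℕ → A) (k : ℕ) :
    (applyList f (takeWord v k)).length = blockStart f v k := by
  induction k with
  | zero => simp [takeWord, applyList, blockStart]
  | succ k ih =>
      rw [takeWord, applyList_append_s2, List.length_append, ih, blockStart]
      simp [applyList]

lemma applyList_take_prefix (f : A → List A) (v : ℕ → A) {k k' : ℕ} (h : k ≤ k') :
    applyList f (takeWord v k) <+: applyList f (takeWord v k') := by
  induction k', h using Nat.le_induction with
  | base => exact List.prefix_refl _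
  | succ k' hk ih =>
      refine ih.trans ?_
      rw [takeWord, applyList_append_s2]
      exact List.prefix_append _ _

lemma blockStart_le (f : A → List A) (v : ℕ → A) (hf : ∀ a, f a ≠ []) (n : ℕ) :
    n ≤ blockStart f v n := by
  induction n with
  | zero => simp [blockStart]
  | succ n ih =>
      have := List.length_pos_iff.2 (hf (v n))
      simp only [blockStart]; omega

lemma blockStart_congr (f : A → List A) {v v' : ℕ → A} {k : ℕ}
    (h : ∀ j < k, v j = v' j) : blockStart f v k = blockStart f v' k := by
  induction k with
  | zero => rfl
  | succ k ih =>
      simp only [blockStart, ih (fun j hj => h j (hj.trans (Nat.lt_succ_self k))),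
        h k (Nat.lt_succ_self k)]

/-- apply a substitution to an infinite word, as a total function. -/
def applyWord (f : A → List A) (v : ℕ → A) (d : A) (p : ℕ) : A :=
  (applyList f (takeWord v (p + 1))).getD p d

lemma applyEq_applyWord (f : A → List A) (v : ℕ → A) (d : A) (hf : ∀ a, f a ≠ []) :
    ApplyEq f v (applyWord f v d) := by
  intro n i h
  set p := blockStart f v n + i with hp
  have hlen1 : p < (applyList f (takeWord v (n + 1))).length := by
    rw [applyList_take_length]
    simp only [blockStart]; omega
  have hnp : n + 1 ≤ p + 1 := by
    have := blockStart_le f v hf n; omega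
  have hpre := applyList_take_prefix f v hnp
  have hlen2 : p < (applyList f (takeWord v (p + 1))).length :=
    lt_of_lt_of_le hlen1 hpre.length_le
  have e1 : applyWord f v d p = (applyList f (takeWord v (p + 1)))[p] :=
    List.getD_eq_getElem _ _ hlen2
  have e2 : (applyList f (takeWord v (p + 1)))[p] = (applyList f (takeWord v (n + 1)))[p] :=
    (hpre.getElem hlen1).symm
  have e3 : (applyList f (takeWord v (n + 1)))[p]'hlen1 = (f (v n))[i] := by
    have hsplit : applyList f (takeWord v (n + 1)) = applyList f (takeWord v n) ++ f (v n) := by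
      simp [takeWord, applyList_append_s2, applyList]
    rw [List.getElem_of_eq hsplit hlen1]
    rw [List.getElem_append_right (by rw [applyList_take_length]; omega)]
    congr 1
    rw [applyList_take_length]
    omega
  rw [e1, e2, e3]

/-- downward approximations: `approx σ w0 d m` is a word family satisfying the
desubstitution equations below level `m`. -/
def approx (σ : ℕ → A → List A) (w0 : ℕ → A) (d : A) (m n : ℕ) : ℕ → A :=
  if h : m ≤ n then w0 else applyWord (σ n) (approx σ w0 d m (n + 1)) d
termination_by m - n
decreasing_by omega

lemma approx_spec (σ : ℕ → A → List A) (w0 : ℕ → A) (d : A) {m n : ℕ} (h : n < m) :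
    approx σ w0 d m n = applyWord (σ n) (approx σ w0 d m (n + 1)) d := by
  rw [approx]; simp [Nat.not_le.2 h]

lemma exists_ulim [Finite A] (U : Ultrafilter ℕ) (g : ℕ → A) :
    ∃ a, {m | g m = a} ∈ U := by
  obtain ⟨a, ha⟩ := Ultrafilter.eq_pure_of_finite (U.map g)
  refine ⟨a, ?_⟩
  have h1 : {a} ∈ U.map g := by rw [ha]; exact Filter.mem_pure.2 rfl
  simpa [Ultrafilter.mem_map, Set.preimage, Set.mem_singleton_iff] using h1

/-- any infinite sequence of substitutions of `S` is the directive
sequence of at least one infinite word. -/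
theorem stmt2 {A : Type u} [Fintype A] [Nonempty A] (S : Set (A → List A))
    (hS : ∀ f ∈ S, ∀ a, f a ≠ []) (σ : ℕ → A → List A) (hσ : ∀ n, σ n ∈ S) :
    ∃ (w : ℕ → A) (ws : ℕ → ℕ → A),
      ws 0 = w ∧ ∀ n, ApplyEq (σ n) (ws (n + 1)) (ws n) := by
  classical
  set d : A := Classical.arbitrary A with hd
  set w0 : ℕ → A := fun _ => d with hw0
  set U : Ultrafilter ℕ := Ultrafilter.of Filter.cofinite with hU
  haveI : (Filter.cofinite : Filter ℕ).NeBot := Nat.cofinite_eq_atTop ▸ Filter.atTop_neBot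
  have hUcof : (U : Filter ℕ) ≤ Filter.cofinite := Ultrafilter.of_le _
  have hex : ∀ g : ℕ → A, ∃ a, {m | g m = a} ∈ U := exists_ulim U
  set ws : ℕ → ℕ → A := fun n i => (hex (fun m => approx σ w0 d m n i)).choose with hws
  have hspec : ∀ n i, {m | approx σ w0 d m n i = ws n i} ∈ U := fun n i =>
    (hex (fun m => approx σ w0 d m n i)).choose_spec
  refine ⟨ws 0, ws, rfl, ?_⟩
  intro n n' i h
  set p := blockStart (σ n) (ws (n + 1)) n' + i with hpdef
  -- the large set of good approximation indices
  have hE1 : (⋂ j ∈ Set.Iic n', {m | approx σ w0 d m (n + 1) j = ws (n + 1) j}) ∈ U :=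
    (Filter.biInter_mem (Set.finite_Iic n')).2 fun j _ => hspec (n + 1) j
  have hE2 : {m | approx σ w0 d m n p = ws n p} ∈ U := hspec n p
  have hE3 : {m | n < m} ∈ U := by
    apply hUcof
    rw [Nat.cofinite_eq_atTop]
    exact Filter.eventually_gt_atTop n
  obtain ⟨m, hm⟩ := Filter.nonempty_of_mem
    (Filter.inter_mem (Filter.inter_mem hE1 hE2) hE3 : _ ∈ (U : Filter ℕ))
  obtain ⟨⟨hm1, hm2⟩, hm3⟩ := hm
  have hm3' : n < m := hm3
  have hm2' : approx σ w0 d m n p = ws n p := hm2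
  have hm1' : ∀ j ≤ n', approx σ w0 d m (n + 1) j = ws (n + 1) j := by
    intro j hj
    exact Set.mem_iInter₂.1 hm1 j hj
  have hbs : blockStart (σ n) (approx σ w0 d m (n + 1)) n'
      = blockStart (σ n) (ws (n + 1)) n' :=
    blockStart_congr _ (fun j hj => hm1' j hj.le)
  have hA : ApplyEq (σ n) (approx σ w0 d m (n + 1)) (approx σ w0 d m n) := by
    rw [approx_spec σ w0 d hm3']
    exact applyEq_applyWord _ _ _ (hS _ (hσ n))
  have hlet : approx σ w0 d m (n + 1) n' = ws (n + 1) n' := hm1' n' le_rfl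
  have h' : i < (σ n (approx σ w0 d m (n + 1) n')).length := by rw [hlet]; exact h
  have key := hA n' i h'
  rw [hbs] at key
  simp only [hlet] at key
  rw [← hm2']
  exact key
end

section
/- An infinite binary word over {a,b} is balanced if and only if it belongs to the stable set of the set S_bal = {L_a, L_b, R_a, R_b}, i.e., if and only if it can be indefinitely desubstituted using substitutions from S_bal. -/
universe u
variable {A : Type u}

-- Binary alphabet: letter `a` is `false`, letter `b` is `true`.
def La : Bool → List Bool | false => [false] | true => [false, true]
def Lb : Bool → List Bool | false => [true, false] | true => [true]
def Ra : Bool → List Bool | false => [false] | true => [true, false]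
def Rb : Bool → List Bool | false => [false, true] | true => [true]

/-- An infinite word is balanced. -/
def IsBalanced (w : ℕ → Bool) : Prop :=
  ∀ (c : Bool) (u v : List Bool), Factor w u → Factor w v → u.length = v.length →
    |(u.count c : ℤ) - (v.count c : ℤ)| ≤ 1

namespace Stmt3Aux
open List

variable {A : Type u}

lemma factorAt_cons {w : ℕ → A} {c : A} {u : List A} {k : ℕ} :
    FactorAt w (c :: u) k ↔ w k = c ∧ FactorAt w u (k + 1) := by
  constructor
  · intro h
    constructor
    · have := h 0 (by simp)
      simpa using this.symm
    · intro i hi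
      have := h (i + 1) (by simpa using Nat.succ_lt_succ hi)
      have e : k + (i + 1) = k + 1 + i := by omega
      rw [e] at this
      simpa using this
  · rintro ⟨h1, h2⟩ i hi
    cases i with
    | zero => simpa using h1.symm
    | succ j =>
        have hj : j < u.length := by simpa using Nat.lt_of_succ_lt_succ hi
        have := h2 j hj
        have e : k + (j + 1) = k + 1 + j := by omega
        rw [e]
        simpa using this

lemma factorAt_singleton {w : ℕ → A} {c : A} {k : ℕ} (h : w k = c) :
    FactorAt w [c] k := by
  rw [factorAt_cons]
  exact ⟨h, fun i hi => by simp at hi⟩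

lemma factorAt_append {w : ℕ → A} {x y : List A} {k : ℕ}
    (hx : FactorAt w x k) (hy : FactorAt w y (k + x.length)) :
    FactorAt w (x ++ y) k := by
  intro i hi
  rcases Nat.lt_or_ge i x.length with h' | h'
  · rw [List.getElem_append_left h']
    exact hx i h'
  · rw [List.getElem_append_right h']
    have hlt : i - x.length < y.length := by
      simp at hi; omega
    have := hy (i - x.length) hlt
    have e : k + x.length + (i - x.length) = k + i := by omega
    rw [e] at this
    exact this

lemma factorAt_left {w : ℕ → A} {x y : List A} {k : ℕ}
    (h : FactorAt w (x ++ y) k) : FactorAt w x k := by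
  intro i hi
  have hi' : i < (x ++ y).length := by simp; omega
  have := h i hi'
  rwa [List.getElem_append_left hi] at this

lemma factorAt_right {w : ℕ → A} {x y : List A} {k : ℕ}
    (h : FactorAt w (x ++ y) k) : FactorAt w y (k + x.length) := by
  intro i hi
  have hi' : x.length + i < (x ++ y).length := by simp; omega
  have := h (x.length + i) hi'
  rw [List.getElem_append_right (by omega)] at this
  simp only [Nat.add_sub_cancel_left] at this
  rw [this]
  congr 1
  omega

lemma factor_of_infix {w : ℕ → A} {x u : List A} (h : Factor w x)
    (hinf : u <:+: x) : Factor w u := by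
  obtain ⟨k, hk⟩ := h
  obtain ⟨s, t, hst⟩ := hinf
  have hk' : FactorAt w (s ++ (u ++ t)) k := by
    rw [← hst] at hk; rwa [List.append_assoc] at hk
  exact ⟨k + s.length, factorAt_left (factorAt_right hk')⟩

/- ### slice -/

def slice (v : ℕ → A) (k n : ℕ) : List A := List.ofFn fun i : Fin n => v (k + i)

@[simp] lemma slice_length {v : ℕ → A} {k n : ℕ} : (slice v k n).length = n := by
  simp [slice]

lemma slice_getElem {v : ℕ → A} {k n i : ℕ} (h : i < (slice v k n).length) :
    (slice v k n)[i] = v (k + i) := by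
  simp [slice]

lemma factorAt_slice {v : ℕ → A} {k n : ℕ} : FactorAt v (slice v k n) k := by
  intro i hi
  exact slice_getElem hi

lemma slice_cons {v : ℕ → A} {k n : ℕ} :
    slice v k (n + 1) = v k :: slice v (k + 1) n := by
  simp only [slice, List.ofFn_succ, Fin.val_zero, Nat.add_zero, Fin.val_succ]
  congr 1
  refine congrArg _ (funext fun i => ?_)
  congr 1
  omega

/- ### blockStart generic lemmas -/

variable {f : A → List A} {v : ℕ → A}

lemma bs_succ (f : A → List A) (v : ℕ → A) (n : ℕ) :
    blockStart f v (n + 1) = blockStart f v n + (f (v n)).length := rfl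

lemma bs_lt_of_lt (hf : ∀ c, 0 < (f c).length) {k k' : ℕ} (h : k < k') :
    blockStart f v k < blockStart f v k' := by
  induction k' with
  | zero => omega
  | succ n ih =>
      rcases Nat.lt_or_ge k n with h' | h'
      · have := ih h'
        have := hf (v n)
        rw [bs_succ]
        omega
      · have hk : k = n := by omega
        subst hk
        rw [bs_succ]
        have := hf (v k)
        omega

lemma bs_le_of_le (hf : ∀ c, 0 < (f c).length) {k k' : ℕ} (h : k ≤ k') :
    blockStart f v k ≤ blockStart f v k' := by
  rcases Nat.lt_or_ge k k' with h' | h'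
  · exact le_of_lt (bs_lt_of_lt hf h')
  · have : k = k' := by omega
    subst this; rfl

lemma lt_of_bs_lt (hf : ∀ c, 0 < (f c).length) {k k' : ℕ}
    (h : blockStart f v k < blockStart f v k') : k < k' := by
  by_contra h'
  have := bs_le_of_le (v := v) hf (Nat.le_of_not_lt h')
  omega

lemma le_of_bs_le (hf : ∀ c, 0 < (f c).length) {k k' : ℕ}
    (h : blockStart f v k ≤ blockStart f v k') : k ≤ k' := by
  by_contra h'
  have := bs_lt_of_lt (v := v) hf (Nat.lt_of_not_le h')
  omega

lemma bs_inj (hf : ∀ c, 0 < (f c).length) {k k' : ℕ}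
    (h : blockStart f v k = blockStart f v k') : k = k' := by
  have h1 := le_of_bs_le (v := v) hf h.le
  have h2 := le_of_bs_le (v := v) hf h.ge
  omega

lemma bs_add_le (hf : ∀ c, 0 < (f c).length) (k j : ℕ) :
    blockStart f v k + j ≤ blockStart f v (k + j) := by
  induction j with
  | zero => simp
  | succ n ih =>
      have : blockStart f v (k + n) < blockStart f v (k + n + 1) :=
        bs_lt_of_lt hf (by omega)
      have e : k + (n + 1) = k + n + 1 := by omega
      rw [e]
      omega

lemma bs_cover (hf : ∀ c, 0 < (f c).length) (p : ℕ) :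
    ∃ k, blockStart f v k ≤ p ∧ p < blockStart f v (k + 1) := by
  induction p with
  | zero =>
      refine ⟨0, le_refl _, ?_⟩
      have := bs_lt_of_lt (v := v) hf (show 0 < 1 by omega)
      simpa [blockStart] using this
  | succ n ih =>
      obtain ⟨k, h1, h2⟩ := ih
      rcases Nat.lt_or_ge (n + 1) (blockStart f v (k + 1)) with h | h
      · exact ⟨k, by omega, h⟩
      · refine ⟨k + 1, by omega, ?_⟩
        have h4 : blockStart f v (k + 1) < blockStart f v (k + 1 + 1) :=
          bs_lt_of_lt hf (by omega)
        omega

lemma applyEq_letter {w : ℕ → A} (hA : ApplyEq f v w) {k p : ℕ}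
    (h1 : blockStart f v k ≤ p) (h2 : p < blockStart f v (k + 1)) :
    ∃ (hlt : p - blockStart f v k < (f (v k)).length),
      w p = (f (v k))[p - blockStart f v k] := by
  rw [bs_succ] at h2
  have hlt : p - blockStart f v k < (f (v k)).length := by omega
  refine ⟨hlt, ?_⟩
  have := hA k (p - blockStart f v k) hlt
  have e : blockStart f v k + (p - blockStart f v k) = p := by omega
  rwa [e] at this

lemma applyEq_image {w : ℕ → A} (hA : ApplyEq f v w) :
    ∀ (u : List A) (k : ℕ), FactorAt v u k →
      FactorAt w (applyList f u) (blockStart f v k) ∧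
      blockStart f v (k + u.length) = blockStart f v k + (applyList f u).length := by
  intro u
  induction u with
  | nil => intro k _; constructor
           · intro i hi; simp [applyList] at hi
           · simp [applyList]
  | cons c u ih =>
      intro k hk
      rw [factorAt_cons] at hk
      obtain ⟨h1, h2⟩ := hk
      subst h1
      obtain ⟨ih1, ih2⟩ := ih (k + 1) h2
      have himg : applyList f (v k :: u) = f (v k) ++ applyList f u := by
        simp [applyList]
      constructor
      · rw [himg]
        apply factorAt_append
        · intro i hi
          exact (hA k i hi).symm
        · have e : blockStart f v k + (f (v k)).length = blockStart f v (k + 1) := by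
            rw [bs_succ]
          rw [e]
          exact ih1
      · have e : k + (v k :: u).length = (k + 1) + u.length := by simp; omega
        rw [e, ih2, himg, bs_succ]
        simp
        omega




/- ### Ra specific lemmas -/

def UnbalWit (w : ℕ → Bool) (t : List Bool) : Prop :=
  Factor w (false :: (t ++ [false])) ∧ Factor w (true :: (t ++ [true]))

lemma factorAt_singleton' {w : ℕ → A} {c : A} {k : ℕ} (h : FactorAt w [c] k) :
    w k = c := by
  have := h 0 (by simp)
  simpa using this.symm

lemma Ra_len : ∀ c, 0 < (Ra c).length := by intro c; cases c <;> simp [Ra]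

section RaLemmas

variable {v w : ℕ → Bool} (hA : ApplyEq Ra v w)
include hA

lemma Ra_head (k : ℕ) : w (blockStart Ra v k) = v k := by
  cases hv : v k with
  | false =>
      have h := hA k 0 (by simp [hv, Ra])
      simp [hv, Ra] at h
      simpa [hv] using h
  | true =>
      have h := hA k 0 (by simp [hv, Ra])
      simp [hv, Ra] at h
      simpa [hv] using h

lemma Ra_second {k : ℕ} (h : v k = true) : w (blockStart Ra v k + 1) = false := by
  have h1 := hA k 1 (by simp [h, Ra])
  simp [h, Ra] at h1
  exact h1

lemma Ra_classify (q : ℕ) :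
    ∃ k, blockStart Ra v q = blockStart Ra v q ∧
      (blockStart Ra v k = q ∨ (v k = true ∧ blockStart Ra v k + 1 = q)) := by
  obtain ⟨k, h1, h2⟩ := bs_cover (f := Ra) (v := v) Ra_len q
  refine ⟨k, rfl, ?_⟩
  cases hv : v k with
  | false =>
      have hlen : (Ra (v k)).length = 1 := by simp [hv, Ra]
      rw [bs_succ, hlen] at h2
      left; omega
  | true =>
      have hlen : (Ra (v k)).length = 2 := by simp [hv, Ra]
      rw [bs_succ, hlen] at h2
      rcases Nat.lt_or_ge q (blockStart Ra v k + 1) with h | h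
      · left; omega
      · right; exact ⟨by simp [hv], by omega⟩

lemma Ra_bstart_of_b {q : ℕ} (hq : w q = true) :
    ∃ k, blockStart Ra v k = q ∧ v k = true := by
  obtain ⟨k, -, h⟩ := Ra_classify hA q
  rcases h with h | ⟨hv, h⟩
  · refine ⟨k, h, ?_⟩
    have := Ra_head hA k
    rw [h, hq] at this
    exact this.symm
  · have := Ra_second hA hv
    rw [h, hq] at this
    exact absurd this (by simp)

lemma Ra_nobb {q : ℕ} (hq : w q = true) : w (q + 1) = false := by
  obtain ⟨k, hk, hv⟩ := Ra_bstart_of_b hA hq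
  have := Ra_second hA hv
  rwa [hk] at this

lemma Ra_bstart_of_prev {q : ℕ} (hq : w q = false) :
    ∃ k, blockStart Ra v k = q + 1 := by
  obtain ⟨k, -, h⟩ := Ra_classify hA q
  rcases h with h | ⟨hv, h⟩
  · have hvk : v k = false := by
      have := Ra_head hA k
      rw [h, hq] at this
      exact this.symm
    refine ⟨k + 1, ?_⟩
    have hlen : (Ra (v k)).length = 1 := by simp [hvk, Ra]
    rw [bs_succ, hlen, h]
  · refine ⟨k + 1, ?_⟩
    have hlen : (Ra (v k)).length = 2 := by simp [hv, Ra]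
    rw [bs_succ, hlen]
    omega

lemma Ra_parse :
    ∀ L k k₂ m m₂, k ≤ k₂ → m ≤ m₂ →
      blockStart Ra v k₂ = blockStart Ra v k + L →
      blockStart Ra v m₂ = blockStart Ra v m + L →
      (∀ i, i < L → w (blockStart Ra v k + i) = w (blockStart Ra v m + i)) →
      slice v k (k₂ - k) = slice v m (m₂ - m) := by
  intro L
  induction L using Nat.strong_induction_on with
  | _ L ih =>
    intro k k₂ m m₂ hk hm hbk hbm hcont
    rcases Nat.eq_zero_or_pos L with h0 | hpos
    · subst h0
      have hbseq1 : blockStart Ra v k₂ = blockStart Ra v k := by omega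
      have hbseq2 : blockStart Ra v m₂ = blockStart Ra v m := by omega
      have e1 : k₂ = k := bs_inj Ra_len hbseq1
      have e2 : m₂ = m := bs_inj Ra_len hbseq2
      subst e1; subst e2
      simp [slice]
    · have hbs1 : blockStart Ra v k < blockStart Ra v k₂ := by omega
      have hbs2 : blockStart Ra v m < blockStart Ra v m₂ := by omega
      have hkk : k < k₂ := lt_of_bs_lt Ra_len hbs1
      have hmm : m < m₂ := lt_of_bs_lt Ra_len hbs2
      have hw0 : w (blockStart Ra v k) = w (blockStart Ra v m) := by
        have := hcont 0 hpos
        simpa using this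
      have hv0 : v k = v m := by
        rw [← Ra_head hA k, ← Ra_head hA m]
        exact hw0
      have hbk1 : blockStart Ra v (k + 1) = blockStart Ra v k + (Ra (v k)).length :=
        bs_succ _ _ _
      have hbm1 : blockStart Ra v (m + 1) = blockStart Ra v m + (Ra (v k)).length := by
        rw [bs_succ, hv0]
      have hl : (Ra (v k)).length ≤ L := by
        have h1 : blockStart Ra v (k + 1) ≤ blockStart Ra v k₂ :=
          bs_le_of_le Ra_len (by omega)
        omega
      have hlpos := Ra_len (v k)
      have a1 : k + 1 ≤ k₂ := by omega
      have a2 : m + 1 ≤ m₂ := by omega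
      have a3 : blockStart Ra v k₂ = blockStart Ra v (k + 1) + (L - (Ra (v k)).length) := by
        omega
      have a4 : blockStart Ra v m₂ = blockStart Ra v (m + 1) + (L - (Ra (v k)).length) := by
        omega
      have ihr := ih ((L - (Ra (v k)).length)) (by omega) (k + 1) k₂ (m + 1) m₂
        a1 a2 a3 a4
        (by
          intro i hi
          have e1 : blockStart Ra v (k + 1) + i = blockStart Ra v k + ((Ra (v k)).length + i) := by
            omega
          have e2 : blockStart Ra v (m + 1) + i = blockStart Ra v m + ((Ra (v k)).length + i) := by
            omega
          rw [e1, e2]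
          exact hcont _ (by omega))
      have ek : k₂ - k = (k₂ - (k + 1)) + 1 := by omega
      have em : m₂ - m = (m₂ - (m + 1)) + 1 := by omega
      rw [ek, em, slice_cons, slice_cons, hv0, ihr]

lemma step_Ra {t : List Bool} (h : UnbalWit w t) :
    ∃ t', UnbalWit v t' ∧ t'.length < t.length := by
  obtain ⟨⟨q, hq⟩, ⟨p, hp⟩⟩ := h
  set L0 := t.length with hL0
  -- decompose the two factor facts
  have hp1 : w p = true := (factorAt_cons.mp hp).1
  have hp' : FactorAt w (t ++ [true]) (p + 1) := (factorAt_cons.mp hp).2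
  have hp2 : FactorAt w t (p + 1) := factorAt_left hp'
  have hp3 : w (p + 1 + L0) = true := factorAt_singleton' (factorAt_right hp')
  have hq1 : w q = false := (factorAt_cons.mp hq).1
  have hq' : FactorAt w (t ++ [false]) (q + 1) := (factorAt_cons.mp hq).2
  have hq2 : FactorAt w t (q + 1) := factorAt_left hq'
  have hq3 : w (q + 1 + L0) = false := factorAt_singleton' (factorAt_right hq')
  -- t is nonempty
  have hL0pos : 0 < L0 := by
    by_contra h0
    have hL : L0 = 0 := by omega
    rw [hL, Nat.add_zero] at hp3
    have := Ra_nobb hA hp1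
    rw [hp3] at this
    simp at this
  -- letters after the b's
  have hwp1 : w (p + 1) = false := Ra_nobb hA hp1
  have hwq1 : w (q + 1) = false := by
    have e1 := hp2 0 (by omega)
    have e2 := hq2 0 (by omega)
    simp only [Nat.add_zero] at e1 e2
    rw [e2] at e1
    rw [e1]
    exact hwp1
  -- last letter of t is false
  have hwpL : w (p + L0) = false := by
    cases hc : w (p + L0) with
    | false => rfl
    | true =>
        have := Ra_nobb hA hc
        have e : p + L0 + 1 = p + 1 + L0 := by omega
        rw [e, hp3] at this
        simp at this
  have hwqL : w (q + L0) = false := by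
    have e1 := hp2 (L0 - 1) (by omega)
    have e2 := hq2 (L0 - 1) (by omega)
    rw [e2] at e1
    have ee1 : q + 1 + (L0 - 1) = q + L0 := by omega
    have ee2 : p + 1 + (L0 - 1) = p + L0 := by omega
    rw [ee1, ee2] at e1
    rw [e1]
    exact hwpL
  -- block starts
  obtain ⟨k, hbsk, hvk⟩ := Ra_bstart_of_b hA hp1
  obtain ⟨kB, hbskB, hvkB⟩ := Ra_bstart_of_b hA (show w (p + L0 + 1) = true by
    have e : p + L0 + 1 = p + 1 + L0 := by omega
    rw [e]; exact hp3)
  have hbsk1 : blockStart Ra v (k + 1) = p + 2 := by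
    have hlen : (Ra (v k)).length = 2 := by simp [hvk, Ra]
    rw [bs_succ, hlen, hbsk]
  obtain ⟨m0, hbsm0⟩ := Ra_bstart_of_prev hA hq1
  have hvm0 : v m0 = false := by
    have := Ra_head hA m0
    rw [hbsm0, hwq1] at this
    exact this.symm
  have hbsm1 : blockStart Ra v (m0 + 1) = q + 2 := by
    have hlen : (Ra (v m0)).length = 1 := by simp [hvm0, Ra]
    rw [bs_succ, hlen, hbsm0]
  obtain ⟨mB, hbsmB⟩ := Ra_bstart_of_prev hA hwqL
  -- v mB = false
  have hvmB : v mB = false := by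
    have := Ra_head hA mB
    rw [hbsmB] at this
    have e : q + L0 + 1 = q + 1 + L0 := by omega
    rw [e, hq3] at this
    exact this.symm
  -- index inequalities
  have hbsineq1 : blockStart Ra v (k + 1) ≤ blockStart Ra v kB := by omega
  have hbsineq2 : blockStart Ra v (m0 + 1) ≤ blockStart Ra v mB := by omega
  have hkkB : k + 1 ≤ kB := le_of_bs_le Ra_len hbsineq1
  have hmmB : m0 + 1 ≤ mB := le_of_bs_le Ra_len hbsineq2
  -- parse
  have hpar := Ra_parse hA (L0 - 1) (k + 1) kB (m0 + 1) mB hkkB hmmB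
    (by omega) (by omega)
    (by
      intro i hi
      have e1 : blockStart Ra v (k + 1) + i = p + 1 + (i + 1) := by omega
      have e2 : blockStart Ra v (m0 + 1) + i = q + 1 + (i + 1) := by omega
      rw [e1, e2, ← hp2 (i + 1) (by omega), ← hq2 (i + 1) (by omega)])
  set r := slice v (k + 1) (kB - (k + 1)) with hr
  have hrlen : r.length = kB - (k + 1) := by simp [hr]
  have hrlen2 : r.length = mB - (m0 + 1) := by rw [hpar]; simp
  -- length bound
  have hlt : r.length < L0 := by
    have h1 := bs_add_le (f := Ra) (v := v) Ra_len (k + 1) (kB - (k + 1))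
    have e : k + 1 + (kB - (k + 1)) = kB := by omega
    rw [e] at h1
    omega
  refine ⟨r, ⟨⟨m0, ?_⟩, ⟨k, ?_⟩⟩, hlt⟩
  · rw [factorAt_cons]
    refine ⟨hvm0, factorAt_append ?_ ?_⟩
    · rw [hpar]
      exact factorAt_slice
    · have e : m0 + 1 + r.length = mB := by omega
      rw [e]
      exact factorAt_singleton hvmB
  · rw [factorAt_cons]
    refine ⟨hvk, factorAt_append ?_ ?_⟩
    · rw [hr]; exact factorAt_slice
    · have e : k + 1 + r.length = kB := by omega
      rw [e]
      exact factorAt_singleton hvkB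

end RaLemmas

/- ### La specific lemmas -/

lemma La_len : ∀ c, 0 < (La c).length := by intro c; cases c <;> simp [La]

section LaLemmas

variable {v w : ℕ → Bool} (hA : ApplyEq La v w)
include hA

lemma La_head (k : ℕ) : w (blockStart La v k) = false := by
  cases hv : v k with
  | false =>
      have h := hA k 0 (by simp [hv, La])
      simp [hv, La] at h
      exact h
  | true =>
      have h := hA k 0 (by simp [hv, La])
      simp [hv, La] at h
      exact h

lemma La_second {k : ℕ} (h : v k = true) : w (blockStart La v k + 1) = true := by
  have h1 := hA k 1 (by simp [h, La])
  simp [h, La] at h1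
  exact h1

lemma La_next (k : ℕ) : w (blockStart La v k + 1) = v k := by
  cases hv : v k with
  | true => exact La_second hA hv
  | false =>
      have hlen : (La (v k)).length = 1 := by simp [hv, La]
      have e : blockStart La v (k + 1) = blockStart La v k + 1 := by
        rw [bs_succ, hlen]
      rw [← e]
      exact La_head hA (k + 1)

lemma La_classify (q : ℕ) :
    ∃ k, blockStart La v k = q ∨ (v k = true ∧ blockStart La v k + 1 = q) := by
  obtain ⟨k, h1, h2⟩ := bs_cover (f := La) (v := v) La_len q
  refine ⟨k, ?_⟩
  cases hv : v k with
  | false =>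
      have hlen : (La (v k)).length = 1 := by simp [hv, La]
      rw [bs_succ, hlen] at h2
      left; omega
  | true =>
      have hlen : (La (v k)).length = 2 := by simp [hv, La]
      rw [bs_succ, hlen] at h2
      rcases Nat.lt_or_ge q (blockStart La v k + 1) with h | h
      · left; omega
      · right; exact ⟨by simp [hv], by omega⟩

lemma La_bstart_b {q : ℕ} (hq : w q = true) :
    ∃ k, v k = true ∧ blockStart La v k + 1 = q := by
  obtain ⟨k, h⟩ := La_classify hA q
  rcases h with h | ⟨hv, h⟩
  · have := La_head hA k
    rw [h, hq] at this
    exact absurd this (by simp)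
  · exact ⟨k, hv, h⟩

lemma La_nobb {q : ℕ} (hq : w q = true) : w (q + 1) = false := by
  obtain ⟨k, hv, h⟩ := La_bstart_b hA hq
  have hlen : (La (v k)).length = 2 := by simp [hv, La]
  have e : blockStart La v (k + 1) = q + 1 := by
    rw [bs_succ, hlen]; omega
  rw [← e]
  exact La_head hA (k + 1)

lemma La_bstart_of_a {q : ℕ} (hq : w q = false) :
    ∃ k, blockStart La v k = q := by
  obtain ⟨k, h⟩ := La_classify hA q
  rcases h with h | ⟨hv, h⟩
  · exact ⟨k, h⟩
  · have := La_second hA hv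
    rw [h, hq] at this
    exact absurd this (by simp)

lemma La_letter_of_next {q : ℕ} {k : ℕ} (h : blockStart La v k = q)
    (h2 : w (q + 1) = false) : v k = false ∧ blockStart La v (k + 1) = q + 1 := by
  have hn := La_next hA k
  rw [h, h2] at hn
  have hvk : v k = false := hn.symm
  have hlen : (La (v k)).length = 1 := by simp [hvk, La]
  exact ⟨hvk, by rw [bs_succ, hlen, h]⟩

lemma La_parse :
    ∀ L k k₂ m m₂, k ≤ k₂ → m ≤ m₂ →
      blockStart La v k₂ = blockStart La v k + L →
      blockStart La v m₂ = blockStart La v m + L →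
      (∀ i, i < L → w (blockStart La v k + i) = w (blockStart La v m + i)) →
      slice v k (k₂ - k) = slice v m (m₂ - m) := by
  intro L
  induction L using Nat.strong_induction_on with
  | _ L ih =>
    intro k k₂ m m₂ hk hm hbk hbm hcont
    rcases Nat.eq_zero_or_pos L with h0 | hpos
    · subst h0
      have hbseq1 : blockStart La v k₂ = blockStart La v k := by omega
      have hbseq2 : blockStart La v m₂ = blockStart La v m := by omega
      have e1 : k₂ = k := bs_inj La_len hbseq1
      have e2 : m₂ = m := bs_inj La_len hbseq2
      subst e1; subst e2
      simp [slice]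
    · have hbs1 : blockStart La v k < blockStart La v k₂ := by omega
      have hbs2 : blockStart La v m < blockStart La v m₂ := by omega
      have hkk : k < k₂ := lt_of_bs_lt La_len hbs1
      have hmm : m < m₂ := lt_of_bs_lt La_len hbs2
      -- determine the letter
      have hv0 : v k = v m := by
        rcases Nat.lt_or_ge L 2 with hL | hL
        · -- L = 1 : both blocks have length 1
          have hL1 : L = 1 := by omega
          have hk1 : blockStart La v (k + 1) ≤ blockStart La v k₂ :=
            bs_le_of_le La_len (by omega)
          have hm1 : blockStart La v (m + 1) ≤ blockStart La v m₂ :=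
            bs_le_of_le La_len (by omega)
          have hvk : v k = false := by
            by_contra hvt
            have hvt' : v k = true := by
              cases hc : v k
              · exact absurd hc hvt
              · rfl
            have hlen : (La (v k)).length = 2 := by simp [hvt', La]
            rw [bs_succ, hlen] at hk1
            omega
          have hvm : v m = false := by
            by_contra hvt
            have hvt' : v m = true := by
              cases hc : v m
              · exact absurd hc hvt
              · rfl
            have hlen : (La (v m)).length = 2 := by simp [hvt', La]
            rw [bs_succ, hlen] at hm1
            omega
          rw [hvk, hvm]
        · have h1 := La_next hA k
          have h2 := La_next hA m
          have h3 := hcont 1 (by omega)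
          rw [h1, h2] at h3
          exact h3
      have hbk1 : blockStart La v (k + 1) = blockStart La v k + (La (v k)).length :=
        bs_succ _ _ _
      have hbm1 : blockStart La v (m + 1) = blockStart La v m + (La (v k)).length := by
        rw [bs_succ, hv0]
      have hl : (La (v k)).length ≤ L := by
        have h1 : blockStart La v (k + 1) ≤ blockStart La v k₂ :=
          bs_le_of_le La_len (by omega)
        omega
      have hlpos := La_len (v k)
      have a1 : k + 1 ≤ k₂ := by omega
      have a2 : m + 1 ≤ m₂ := by omega
      have a3 : blockStart La v k₂ = blockStart La v (k + 1) + (L - (La (v k)).length) := by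
        omega
      have a4 : blockStart La v m₂ = blockStart La v (m + 1) + (L - (La (v k)).length) := by
        omega
      have ihr := ih ((L - (La (v k)).length)) (by omega) (k + 1) k₂ (m + 1) m₂
        a1 a2 a3 a4
        (by
          intro i hi
          have e1 : blockStart La v (k + 1) + i = blockStart La v k + ((La (v k)).length + i) := by
            omega
          have e2 : blockStart La v (m + 1) + i = blockStart La v m + ((La (v k)).length + i) := by
            omega
          rw [e1, e2]
          exact hcont _ (by omega))
      have ek : k₂ - k = (k₂ - (k + 1)) + 1 := by omega
      have em : m₂ - m = (m₂ - (m + 1)) + 1 := by omega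
      rw [ek, em, slice_cons, slice_cons, hv0, ihr]

lemma step_La {t : List Bool} (h : UnbalWit w t) :
    ∃ t', UnbalWit v t' ∧ t'.length < t.length := by
  obtain ⟨⟨q, hq⟩, ⟨p, hp⟩⟩ := h
  set L0 := t.length with hL0
  have hp1 : w p = true := (factorAt_cons.mp hp).1
  have hp' : FactorAt w (t ++ [true]) (p + 1) := (factorAt_cons.mp hp).2
  have hp2 : FactorAt w t (p + 1) := factorAt_left hp'
  have hp3 : w (p + 1 + L0) = true := factorAt_singleton' (factorAt_right hp')
  have hq1 : w q = false := (factorAt_cons.mp hq).1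
  have hq' : FactorAt w (t ++ [false]) (q + 1) := (factorAt_cons.mp hq).2
  have hq2 : FactorAt w t (q + 1) := factorAt_left hq'
  have hq3 : w (q + 1 + L0) = false := factorAt_singleton' (factorAt_right hq')
  have hL0pos : 0 < L0 := by
    by_contra h0
    have hL : L0 = 0 := by omega
    rw [hL, Nat.add_zero] at hp3
    have := La_nobb hA hp1
    rw [hp3] at this
    simp at this
  have hwp1 : w (p + 1) = false := La_nobb hA hp1
  have hwq1 : w (q + 1) = false := by
    have e1 := hp2 0 (by omega)
    have e2 := hq2 0 (by omega)
    simp only [Nat.add_zero] at e1 e2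
    rw [e2] at e1
    rw [e1]
    exact hwp1
  have hwpL : w (p + L0) = false := by
    cases hc : w (p + L0) with
    | false => rfl
    | true =>
        have := La_nobb hA hc
        have e : p + L0 + 1 = p + 1 + L0 := by omega
        rw [e, hp3] at this
        simp at this
  have hwqL : w (q + L0) = false := by
    have e1 := hp2 (L0 - 1) (by omega)
    have e2 := hq2 (L0 - 1) (by omega)
    rw [e2] at e1
    have ee1 : q + 1 + (L0 - 1) = q + L0 := by omega
    have ee2 : p + 1 + (L0 - 1) = p + L0 := by omega
    rw [ee1, ee2] at e1
    rw [e1]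
    exact hwpL
  -- block starts
  obtain ⟨k, hvk, hbsk⟩ := La_bstart_b hA hp1
  have hbsk1 : blockStart La v (k + 1) = p + 1 := by
    have hlen : (La (v k)).length = 2 := by simp [hvk, La]
    rw [bs_succ, hlen]; omega
  obtain ⟨kB, hbskB⟩ := La_bstart_of_a hA hwpL
  have hvkB : v kB = true := by
    obtain ⟨k', hvk', hbsk'⟩ := La_bstart_b hA hp3
    have he : blockStart La v k' = blockStart La v kB := by omega
    have : k' = kB := bs_inj La_len he
    rw [← this]
    exact hvk'
  obtain ⟨m0, hbsm0⟩ := La_bstart_of_a hA hq1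
  obtain ⟨hvm0, hbsm1⟩ := La_letter_of_next hA hbsm0 hwq1
  obtain ⟨mB, hbsmB⟩ := La_bstart_of_a hA hwqL
  have hvmB : v mB = false := by
    have h2 : w (q + L0 + 1) = false := by
      have e : q + L0 + 1 = q + 1 + L0 := by omega
      rw [e]; exact hq3
    exact (La_letter_of_next hA hbsmB h2).1
  have hbsineq1 : blockStart La v (k + 1) ≤ blockStart La v kB := by omega
  have hbsineq2 : blockStart La v (m0 + 1) ≤ blockStart La v mB := by omega
  have hkkB : k + 1 ≤ kB := le_of_bs_le La_len hbsineq1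
  have hmmB : m0 + 1 ≤ mB := le_of_bs_le La_len hbsineq2
  have hpar := La_parse hA (L0 - 1) (k + 1) kB (m0 + 1) mB hkkB hmmB
    (by omega) (by omega)
    (by
      intro i hi
      have e1 : blockStart La v (k + 1) + i = p + 1 + i := by omega
      have e2 : blockStart La v (m0 + 1) + i = q + 1 + i := by omega
      rw [e1, e2, ← hp2 i (by omega), ← hq2 i (by omega)])
  set r := slice v (k + 1) (kB - (k + 1)) with hr
  have hrlen : r.length = kB - (k + 1) := by simp [hr]
  have hrlen2 : r.length = mB - (m0 + 1) := by rw [hpar]; simp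
  have hlt : r.length < L0 := by
    have h1 := bs_add_le (f := La) (v := v) La_len (k + 1) (kB - (k + 1))
    have e : k + 1 + (kB - (k + 1)) = kB := by omega
    rw [e] at h1
    omega
  refine ⟨r, ⟨⟨m0, ?_⟩, ⟨k, ?_⟩⟩, hlt⟩
  · rw [factorAt_cons]
    refine ⟨hvm0, factorAt_append ?_ ?_⟩
    · rw [hpar]
      exact factorAt_slice
    · have e : m0 + 1 + r.length = mB := by omega
      rw [e]
      exact factorAt_singleton hvmB
  · rw [factorAt_cons]
    refine ⟨hvk, factorAt_append ?_ ?_⟩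
    · rw [hr]; exact factorAt_slice
    · have e : k + 1 + r.length = kB := by omega
      rw [e]
      exact factorAt_singleton hvkB

end LaLemmas

/- ### flip machinery -/

def flipW (w : ℕ → Bool) : ℕ → Bool := fun n => !(w n)

def flipF (f : Bool → List Bool) : Bool → List Bool := fun c => (f (!c)).map (!·)

lemma flipW_flipW (w : ℕ → Bool) : flipW (flipW w) = w := by
  funext n; simp [flipW]

lemma flipF_La : flipF La = Lb := by
  funext c; cases c <;> simp [flipF, La, Lb]

lemma flipF_Lb : flipF Lb = La := by
  funext c; cases c <;> simp [flipF, La, Lb]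

lemma flipF_Ra : flipF Ra = Rb := by
  funext c; cases c <;> simp [flipF, Ra, Rb]

lemma flipF_Rb : flipF Rb = Ra := by
  funext c; cases c <;> simp [flipF, Ra, Rb]

lemma bs_flip (f : Bool → List Bool) (v : ℕ → Bool) (n : ℕ) :
    blockStart (flipF f) (flipW v) n = blockStart f v n := by
  induction n with
  | zero => rfl
  | succ m ih =>
      rw [bs_succ, bs_succ, ih]
      congr 1
      simp [flipF, flipW]

lemma applyEq_flip {f : Bool → List Bool} {v w : ℕ → Bool} (hA : ApplyEq f v w) :
    ApplyEq (flipF f) (flipW v) (flipW w) := by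
  intro n i hi
  have hi' : i < (f (v n)).length := by
    simpa [flipF, flipW] using hi
  have h := hA n i hi'
  simp only [flipF, flipW, Bool.not_not, List.getElem_map]
  rw [bs_flip, h]

lemma factorAt_flip {w : ℕ → Bool} {u : List Bool} {k : ℕ} (h : FactorAt w u k) :
    FactorAt (flipW w) (u.map (!·)) k := by
  intro i hi
  have hi' : i < u.length := by simpa using hi
  have := h i hi'
  simp only [List.getElem_map, flipW]
  rw [this]

lemma unbalWit_flip {w : ℕ → Bool} {t : List Bool} (h : UnbalWit w t) :
    UnbalWit (flipW w) (t.map (!·)) := by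
  obtain ⟨⟨q, hq⟩, ⟨p, hp⟩⟩ := h
  constructor
  · refine ⟨p, ?_⟩
    have := factorAt_flip hp
    simpa using this
  · refine ⟨q, ?_⟩
    have := factorAt_flip hq
    simpa using this

lemma step_any {σ : Bool → List Bool} {v w : ℕ → Bool}
    (hσ : σ = La ∨ σ = Lb ∨ σ = Ra ∨ σ = Rb)
    (hA : ApplyEq σ v w) {t : List Bool} (h : UnbalWit w t) :
    ∃ t', UnbalWit v t' ∧ t'.length < t.length := by
  rcases hσ with h1 | h1 | h1 | h1 <;> subst h1
  · exact step_La hA h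
  · have hA' := applyEq_flip hA
    rw [flipF_Lb] at hA'
    obtain ⟨t'', hw, hl⟩ := step_La hA' (unbalWit_flip h)
    refine ⟨t''.map (!·), ?_, ?_⟩
    · have := unbalWit_flip hw
      rwa [flipW_flipW] at this
    · simpa using hl
  · exact step_Ra hA h
  · have hA' := applyEq_flip hA
    rw [flipF_Rb] at hA'
    obtain ⟨t'', hw, hl⟩ := step_Ra hA' (unbalWit_flip h)
    refine ⟨t''.map (!·), ?_, ?_⟩
    · have := unbalWit_flip hw
      rwa [flipW_flipW] at this
    · simpa using hl

/- ### counting and the unbalancedness witness extraction -/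

lemma count_false_add_count_true (l : List Bool) :
    l.count false + l.count true = l.length := by
  induction l with
  | nil => simp
  | cons c l ih => cases c <;> simp [List.count_cons] <;> omega

lemma exists_first_diff :
    ∀ (s t : List Bool), s.length = t.length → s ≠ t →
      ∃ (p s₂ t₂ : List Bool) (x y : Bool),
        s = p ++ x :: s₂ ∧ t = p ++ y :: t₂ ∧ x ≠ y ∧ s₂.length = t₂.length := by
  intro s
  induction s with
  | nil =>
      intro t h hne
      cases t with
      | nil => exact absurd rfl hne
      | cons b t' => simp at h
  | cons a s ih =>
      intro t h hne
      cases t with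
      | nil => simp at h
      | cons b t' =>
          by_cases hab : a = b
          · subst hab
            have hne' : s ≠ t' := by
              intro hc; exact hne (by rw [hc])
            obtain ⟨p, s₂, t₂, x, y, h1, h2, h3, h4⟩ := ih t' (by simpa using h) hne'
            exact ⟨a :: p, s₂, t₂, x, y, by simp [h1], by simp [h2], h3, h4⟩
          · exact ⟨[], s, t', a, b, by simp, by simp, hab, by simpa using h⟩

lemma unbal_core :
    ∀ (N : ℕ) (u v : List Bool), u.length ≤ N → u.length = v.length →
      v.count true + 2 ≤ u.count true →
      ∃ t, (true :: (t ++ [true])) <:+: u ∧ (false :: (t ++ [false])) <:+: v := by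
  intro N
  induction N with
  | zero =>
      intro u v hN hlen hc
      have := List.count_le_length (a := true) (l := u)
      omega
  | succ N ih =>
      intro u v hN hlen hc
      have hcu := List.count_le_length (a := true) (l := u)
      have hl2 : 2 ≤ u.length := by omega
      obtain ⟨a, u0, hu⟩ : ∃ a u0, u = a :: u0 := by
        cases u with
        | nil => simp at hl2
        | cons a u0 => exact ⟨a, u0, rfl⟩
      obtain ⟨b, v0, hv⟩ : ∃ b v0, v = b :: v0 := by
        cases v with
        | nil => rw [hu] at hlen; simp at hlen
        | cons b v0 => exact ⟨b, v0, rfl⟩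
      obtain ⟨u1, a', hu1⟩ : ∃ u1 a', u0 = u1 ++ [a'] := by
        rcases List.eq_nil_or_concat u0 with h | ⟨u1, a', h⟩
        · rw [hu, h] at hl2; simp at hl2
        · exact ⟨u1, a', by simpa using h⟩
      obtain ⟨v1, b', hv1⟩ : ∃ v1 b', v0 = v1 ++ [b'] := by
        rcases List.eq_nil_or_concat v0 with h | ⟨v1, b', h⟩
        · exfalso
          rw [hu, hv, h] at hlen
          rw [hu] at hl2
          simp at hlen hl2
          rw [hlen] at hl2
          simp at hl2
        · exact ⟨v1, b', by simpa using h⟩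
      subst hu1; subst hu; subst hv1; subst hv
      have hlen1 : u1.length = v1.length := by simp at hlen; omega
      have hNu : u1.length + 2 ≤ N + 1 := by simp at hN; omega
      -- counts
      have hcnt : v1.count true + (if b then 1 else 0) + (if b' then 1 else 0) + 2
          ≤ u1.count true + (if a then 1 else 0) + (if a' then 1 else 0) := by
        cases a <;> cases a' <;> cases b <;> cases b' <;>
          simp [List.count_cons, List.count_append] at hc ⊢ <;> omega
      -- helper infixes
      have huinf : (u1 ++ [a']) <:+: (a :: (u1 ++ [a'])) := ⟨[a], [], by simp⟩
      have hvinf : (v1 ++ [b']) <:+: (b :: (v1 ++ [b'])) := ⟨[b], [], by simp⟩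
      have huinit : (a :: u1) <:+: (a :: (u1 ++ [a'])) := ⟨[], [a'], by simp⟩
      have hvinit : (b :: v1) <:+: (b :: (v1 ++ [b'])) := ⟨[], [b'], by simp⟩
      by_cases hfst : (b = true ∧ a = false) ∨ a = b
      · -- drop first letters
        have hc' : (v1 ++ [b']).count true + 2 ≤ (u1 ++ [a']).count true := by
          rcases hfst with ⟨hb, ha⟩ | hab
          · subst hb; subst ha
            simp [List.count_cons, List.count_append] at hc ⊢
            omega
          · subst hab
            simp [List.count_cons, List.count_append] at hc ⊢
            cases a <;> simp at hc ⊢ <;> omega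
        obtain ⟨t, h1, h2⟩ := ih (u1 ++ [a']) (v1 ++ [b']) (by simp; omega)
          (by simp; omega) hc'
        exact ⟨t, h1.trans huinf, h2.trans hvinf⟩
      · push_neg at hfst
        by_cases hlst : (b' = true ∧ a' = false) ∨ a' = b'
        · -- drop last letters
          have hc' : (b :: v1).count true + 2 ≤ (a :: u1).count true := by
            rcases hlst with ⟨hb, ha⟩ | hab
            · subst hb; subst ha
              simp [List.count_cons, List.count_append] at hc ⊢
              cases a <;> cases b <;> simp at hc ⊢ <;> omega
            · subst hab
              cases a <;> cases a' <;> cases b <;>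
                simp [List.count_cons, List.count_append] at hc ⊢ <;> omega
          obtain ⟨t, h1, h2⟩ := ih (a :: u1) (b :: v1) (by simp; omega)
            (by simp; omega) hc'
          exact ⟨t, h1.trans huinit, h2.trans hvinit⟩
        · push_neg at hlst
          -- now a = true, b = false, a' = true, b' = false
          have ha : a = true := by
            cases a <;> cases b <;> simp at hfst <;> tauto
          have hb : b = false := by
            cases a <;> cases b <;> simp at hfst <;> tauto
          have ha' : a' = true := by
            cases a' <;> cases b' <;> simp at hlst <;> tauto
          have hb' : b' = false := by
            cases a' <;> cases b' <;> simp at hlst <;> tauto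
          subst ha; subst hb; subst ha'; subst hb'
          have hcc : v1.count true ≤ u1.count true := by
            simp [List.count_cons, List.count_append] at hc
            omega
          by_cases hbig : v1.count true + 2 ≤ u1.count true
          · obtain ⟨t, h1, h2⟩ := ih u1 v1 (by omega) hlen1 hbig
            exact ⟨t, h1.trans ⟨[true], [true], by simp⟩,
              h2.trans ⟨[false], [false], by simp⟩⟩
          · by_cases heq : u1 = v1
            · subst heq
              exact ⟨u1, ⟨[], [], by simp⟩, ⟨[], [], by simp⟩⟩
            · obtain ⟨p, s₂, t₂, x, y, h1, h2, hxy, hlen2⟩ :=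
                exists_first_diff u1 v1 hlen1 heq
              subst h1; subst h2
              cases x <;> cases y
              · simp at hxy
              · -- x = false, y = true : pass to suffixes
                have hc' : (t₂ ++ [false]).count true + 2 ≤ (s₂ ++ [true]).count true := by
                  simp [List.count_cons, List.count_append] at hcc ⊢
                  omega
                have hN' : (s₂ ++ [true]).length ≤ N := by
                  simp at hNu ⊢; omega
                obtain ⟨t, h1, h2⟩ := ih (s₂ ++ [true]) (t₂ ++ [false]) hN'
                  (by simp; omega) hc'
                refine ⟨t, h1.trans ⟨true :: (p ++ [false]), [], by simp⟩,
                  h2.trans ⟨false :: (p ++ [true]), [], by simp⟩⟩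
              · -- x = true, y = false : pass to prefixes
                have hc' : (false :: (p ++ [false])).count true + 2
                    ≤ (true :: (p ++ [true])).count true := by
                  simp [List.count_cons, List.count_append]
                have hN' : (true :: (p ++ [true])).length ≤ N := by
                  simp at hNu ⊢; omega
                obtain ⟨t, h1, h2⟩ := ih (true :: (p ++ [true])) (false :: (p ++ [false]))
                  hN' (by simp) hc'
                refine ⟨t, h1.trans ⟨[], s₂ ++ [true], by simp⟩,
                  h2.trans ⟨[], t₂ ++ [false], by simp⟩⟩
              · simp at hxy

lemma unbalWit_of_not_balanced {w : ℕ → Bool} (h : ¬ IsBalanced w) :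
    ∃ t, UnbalWit w t := by
  unfold IsBalanced at h
  push_neg at h
  obtain ⟨c, u, v, hu, hv, hlen, hgt⟩ := h
  have hf1 := count_false_add_count_true u
  have hf2 := count_false_add_count_true v
  have key : v.count true + 2 ≤ u.count true ∨ u.count true + 2 ≤ v.count true := by
    rcases abs_cases ((u.count c : ℤ) - (v.count c : ℤ)) with ⟨h1, _⟩ | ⟨h1, _⟩ <;>
      cases c <;> omega
  rcases key with hk | hk
  · obtain ⟨t, h1, h2⟩ := unbal_core u.length u v le_rfl hlen hk
    exact ⟨t, factor_of_infix hv h2, factor_of_infix hu h1⟩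
  · obtain ⟨t, h1, h2⟩ := unbal_core v.length v u le_rfl hlen.symm hk
    exact ⟨t, factor_of_infix hu h2, factor_of_infix hv h1⟩

lemma not_balanced_of_unbalWit {w : ℕ → Bool} {t : List Bool} (h : UnbalWit w t) :
    ¬ IsBalanced w := by
  intro hb
  obtain ⟨hfa, hfb⟩ := h
  have hball := hb true (true :: (t ++ [true])) (false :: (t ++ [false])) hfb hfa (by simp)
  have c1 : (true :: (t ++ [true])).count true = t.count true + 2 := by
    simp [List.count_cons, List.count_append]
  have c2 : (false :: (t ++ [false])).count true = t.count true := by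
    simp [List.count_cons, List.count_append]
  rw [c1, c2] at hball
  have : ((t.count true + 2 : ℕ) : ℤ) - (t.count true : ℕ) = 2 := by push_cast; ring
  rw [this] at hball
  norm_num at hball

/- ### forward direction: constructions of preimages -/

def posR (w : ℕ → Bool) : ℕ → ℕ
  | 0 => 0
  | n + 1 => posR w n + (if w (posR w n) then 2 else 1)

lemma exists_preimage_Ra {w : ℕ → Bool} (H : ∀ q, w q = true → w (q + 1) = false) :
    ∃ v, ApplyEq Ra v w := by
  refine ⟨fun n => w (posR w n), ?_⟩
  have hbs : ∀ n, blockStart Ra (fun n => w (posR w n)) n = posR w n := by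
    intro n
    induction n with
    | zero => rfl
    | succ m ih =>
        rw [bs_succ, ih]
        show posR w m + (Ra (w (posR w m))).length = posR w (m + 1)
        cases hc : w (posR w m) <;> simp [Ra, posR, hc]
  intro n i hi
  rw [hbs]
  cases hc : w (posR w n) with
  | false =>
      have hi0 : i = 0 := by simp [hc, Ra] at hi; omega
      subst hi0
      simp [hc, Ra]
  | true =>
      have hi01 : i = 0 ∨ i = 1 := by simp [hc, Ra] at hi; omega
      rcases hi01 with h | h <;> subst h
      · simp [hc, Ra]
      · simp [hc, Ra, H _ hc]

def posL (w : ℕ → Bool) : ℕ → ℕ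
  | 0 => 0
  | n + 1 => posL w n + (if w (posL w n + 1) then 2 else 1)

lemma exists_preimage_La {w : ℕ → Bool} (H : ∀ q, w q = true → w (q + 1) = false)
    (h0 : w 0 = false) : ∃ v, ApplyEq La v w := by
  have hInv : ∀ n, w (posL w n) = false := by
    intro n
    induction n with
    | zero => exact h0
    | succ m ih =>
        cases hc : w (posL w m + 1) with
        | false => simpa [posL, hc] using hc
        | true =>
            have h2 := H _ hc
            have e : posL w (m + 1) = posL w m + 2 := by simp [posL, hc]
            rw [e]
            have e2 : posL w m + 2 = posL w m + 1 + 1 := by omega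
            rw [e2]
            exact h2
  refine ⟨fun n => w (posL w n + 1), ?_⟩
  have hbs : ∀ n, blockStart La (fun n => w (posL w n + 1)) n = posL w n := by
    intro n
    induction n with
    | zero => rfl
    | succ m ih =>
        rw [bs_succ, ih]
        show posL w m + (La (w (posL w m + 1))).length = posL w (m + 1)
        cases hc : w (posL w m + 1) <;> simp [La, posL, hc]
  intro n i hi
  rw [hbs]
  cases hc : w (posL w n + 1) with
  | false =>
      have hi0 : i = 0 := by simp [hc, La] at hi; omega
      subst hi0
      simp [hc, La, hInv n]
  | true =>
      have hi01 : i = 0 ∨ i = 1 := by simp [hc, La] at hi; omega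
      rcases hi01 with h | h <;> subst h
      · simp [hc, La, hInv n]
      · simp [hc, La]

/- ### forward direction: transfer of unbalancedness -/

lemma transfer_Ra {v w : ℕ → Bool} (hA : ApplyEq Ra v w) (h0 : w 0 = true)
    {t : List Bool} (hw : UnbalWit v t) : ¬ IsBalanced w := by
  obtain ⟨⟨k₁, hk1⟩, ⟨k₂, hk2⟩⟩ := hw
  set T := applyList Ra t with hT
  have himg2 := (applyEq_image hA _ _ hk2).1
  have he2 : applyList Ra (true :: (t ++ [true]))
      = (true :: false :: (T ++ [true])) ++ [false] := by
    simp [applyList, Ra, hT]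
  rw [he2] at himg2
  have hfac2 : Factor w (true :: false :: (T ++ [true])) := ⟨_, factorAt_left himg2⟩
  have hvk1 : v k₁ = false := (factorAt_cons.mp hk1).1
  have hk1pos : k₁ ≠ 0 := by
    intro h
    subst h
    have hh := Ra_head hA 0
    rw [show blockStart Ra v 0 = 0 from rfl, h0, hvk1] at hh
    simp at hh
  obtain ⟨j, hj⟩ : ∃ j, k₁ = j + 1 := ⟨k₁ - 1, by omega⟩
  subst hj
  have hprev : ∃ P, w P = false ∧ P + 1 = blockStart Ra v (j + 1) := by
    cases hvj : v j with
    | false =>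
        refine ⟨blockStart Ra v j, ?_, ?_⟩
        · rw [Ra_head hA j, hvj]
        · rw [bs_succ]; simp [hvj, Ra]
    | true =>
        refine ⟨blockStart Ra v j + 1, Ra_second hA hvj, ?_⟩
        rw [bs_succ]; simp [hvj, Ra]
  obtain ⟨P, hP1, hP2⟩ := hprev
  have himg1 := (applyEq_image hA _ _ hk1).1
  have he1 : applyList Ra (false :: (t ++ [false])) = false :: (T ++ [false]) := by
    simp [applyList, Ra, hT]
  rw [he1] at himg1
  have hfac1 : FactorAt w ([false] ++ (false :: (T ++ [false]))) P := by
    apply factorAt_append (factorAt_singleton hP1)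
    have e : P + [false].length = blockStart Ra v (j + 1) := by simp; omega
    rw [e]
    exact himg1
  intro hb
  have hlen : (true :: false :: (T ++ [true])).length
      = ([false] ++ (false :: (T ++ [false]))).length := by simp
  have hball := hb true _ _ hfac2 ⟨P, hfac1⟩ hlen
  have c1 : (true :: false :: (T ++ [true])).count true = T.count true + 2 := by
    simp [List.count_cons, List.count_append]
  have c2 : ([false] ++ (false :: (T ++ [false]))).count true = T.count true := by
    simp [List.count_cons, List.count_append]
  rw [c1, c2] at hball
  have e : ((T.count true + 2 : ℕ) : ℤ) - (T.count true : ℕ) = 2 := by push_cast; ring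
  rw [e] at hball
  norm_num at hball

lemma transfer_La {v w : ℕ → Bool} (hA : ApplyEq La v w)
    {t : List Bool} (hw : UnbalWit v t) : ¬ IsBalanced w := by
  obtain ⟨⟨k₁, hk1⟩, ⟨k₂, hk2⟩⟩ := hw
  set T := applyList La t with hT
  obtain ⟨himg1, hbs1⟩ := applyEq_image hA _ _ hk1
  have he1 : applyList La (false :: (t ++ [false])) = false :: (T ++ [false]) := by
    simp [applyList, La, hT]
  have hnext : w (blockStart La v (k₁ + (false :: (t ++ [false])).length)) = false :=
    La_head hA _
  have hfac1 : FactorAt w ((false :: (T ++ [false])) ++ [false]) (blockStart La v k₁) := by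
    apply factorAt_append
    · rw [← he1]; exact himg1
    · have e : blockStart La v k₁ + (false :: (T ++ [false])).length
          = blockStart La v (k₁ + (false :: (t ++ [false])).length) := by
        rw [hbs1, he1]
      rw [e]
      exact factorAt_singleton hnext
  obtain ⟨himg2, -⟩ := applyEq_image hA _ _ hk2
  have he2 : applyList La (true :: (t ++ [true]))
      = [false] ++ (true :: (T ++ [false, true])) := by
    simp [applyList, La, hT]
  rw [he2] at himg2
  have hfac2 := factorAt_right himg2
  intro hb
  have hlen : (true :: (T ++ [false, true])).length
      = ((false :: (T ++ [false])) ++ [false]).length := by simp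
  have hball := hb true _ _ ⟨_, hfac2⟩ ⟨_, hfac1⟩ hlen
  have c1 : (true :: (T ++ [false, true])).count true = T.count true + 2 := by
    simp [List.count_cons, List.count_append]
  have c2 : ((false :: (T ++ [false])) ++ [false]).count true = T.count true := by
    simp [List.count_cons, List.count_append]
  rw [c1, c2] at hball
  have e : ((T.count true + 2 : ℕ) : ℤ) - (T.count true : ℕ) = 2 := by push_cast; ring
  rw [e] at hball
  norm_num at hball

/- ### forward direction: the step -/

lemma balanced_flip {w : ℕ → Bool} (h : IsBalanced w) : IsBalanced (flipW w) := by
  intro c u v hu hv hlen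
  obtain ⟨ku, hku⟩ := hu
  obtain ⟨kv, hkv⟩ := hv
  have hnotinj : Function.Injective (fun b : Bool => !b) := by
    intro a b hab
    cases a <;> cases b <;> simp at hab <;> rfl
  have hu' : Factor w (u.map (!·)) := ⟨ku, by
    have := factorAt_flip hku
    rwa [flipW_flipW] at this⟩
  have hv' : Factor w (v.map (!·)) := ⟨kv, by
    have := factorAt_flip hkv
    rwa [flipW_flipW] at this⟩
  have hball := h (!c) (u.map (!·)) (v.map (!·)) hu' hv' (by simp [hlen])
  have e1 : (u.map (!·)).count (!c) = u.count c :=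
    List.count_map_of_injective u (!·) hnotinj c
  have e2 : (v.map (!·)).count (!c) = v.count c :=
    List.count_map_of_injective v (!·) hnotinj c
  rwa [e1, e2] at hball

lemma step_nobb {w : ℕ → Bool} (hb : IsBalanced w)
    (H : ∀ q, w q = true → w (q + 1) = false) :
    ∃ σ, (σ = La ∨ σ = Ra) ∧ ∃ v, ApplyEq σ v w ∧ IsBalanced v := by
  cases h0 : w 0 with
  | false =>
      obtain ⟨v, hv⟩ := exists_preimage_La H h0
      refine ⟨La, Or.inl rfl, v, hv, ?_⟩
      by_contra hnb
      obtain ⟨t, ht⟩ := unbalWit_of_not_balanced hnb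
      exact transfer_La hv ht hb
  | true =>
      obtain ⟨v, hv⟩ := exists_preimage_Ra H
      refine ⟨Ra, Or.inr rfl, v, hv, ?_⟩
      by_contra hnb
      obtain ⟨t, ht⟩ := unbalWit_of_not_balanced hnb
      exact transfer_Ra hv h0 ht hb

lemma step_balanced {w : ℕ → Bool} (hb : IsBalanced w) :
    ∃ σ, (σ = La ∨ σ = Lb ∨ σ = Ra ∨ σ = Rb) ∧ ∃ v, ApplyEq σ v w ∧ IsBalanced v := by
  by_cases hbb : ∃ q, w q = true ∧ w (q + 1) = true
  · obtain ⟨q0, hq01, hq02⟩ := hbb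
    have Haa : ∀ q, w q = false → w (q + 1) = true := by
      intro q hq
      cases hc : w (q + 1) with
      | true => rfl
      | false =>
          exfalso
          have hfaa : Factor w [false, false] := ⟨q, by
            rw [factorAt_cons]
            exact ⟨hq, factorAt_singleton hc⟩⟩
          have hfbb : Factor w [true, true] := ⟨q0, by
            rw [factorAt_cons]
            exact ⟨hq01, factorAt_singleton hq02⟩⟩
          have := hb true [true, true] [false, false] hfbb hfaa rfl
          norm_num [List.count_cons] at this
    have hbf : IsBalanced (flipW w) := balanced_flip hb
    have Hf : ∀ q, flipW w q = true → flipW w (q + 1) = false := by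
      intro q hq
      have hwq : w q = false := by
        simp only [flipW] at hq
        cases hc : w q
        · rfl
        · rw [hc] at hq; simp at hq
      have := Haa q hwq
      simp [flipW, this]
    obtain ⟨σ, hσ, v, hv, hvb⟩ := step_nobb hbf Hf
    refine ⟨flipF σ, ?_, flipW v, ?_, balanced_flip hvb⟩
    · rcases hσ with h | h <;> subst h
      · right; left; exact flipF_La
      · right; right; right; exact flipF_Ra
    · have := applyEq_flip hv
      rwa [flipW_flipW] at this
  · push_neg at hbb
    have H : ∀ q, w q = true → w (q + 1) = false := by
      intro q hq
      cases hc : w (q + 1) with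
      | false => rfl
      | true => exact absurd hc (hbb q hq)
    obtain ⟨σ, hσ, v, hv, hvb⟩ := step_nobb hb H
    exact ⟨σ, by tauto, v, hv, hvb⟩

end Stmt3Aux

/-- an infinite binary word is balanced iff it belongs to the stable
set of `{L_a, L_b, R_a, R_b}`. -/
theorem stmt3 (w : ℕ → Bool) :
    IsBalanced w ↔ InStable ({La, Lb, Ra, Rb} : Set (Bool → List Bool)) w := by
  constructor
  · intro hw
    have step : ∀ x : {v : ℕ → Bool // IsBalanced v},
        ∃ y : (Bool → List Bool) × {v : ℕ → Bool // IsBalanced v},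
          (y.1 = La ∨ y.1 = Lb ∨ y.1 = Ra ∨ y.1 = Rb) ∧ ApplyEq y.1 y.2.1 x.1 := by
      intro x
      obtain ⟨σ, hσ, v, hv, hvb⟩ := Stmt3Aux.step_balanced x.2
      exact ⟨(σ, ⟨v, hvb⟩), hσ, hv⟩
    choose F hF1 hF2 using step
    let g : ℕ → {v : ℕ → Bool // IsBalanced v} :=
      fun n => Nat.rec ⟨w, hw⟩ (fun _ x => (F x).2) n
    refine ⟨fun n => (F (g n)).1, fun n => (g n).1, ?_, rfl, ?_⟩
    · intro n
      show (F (g n)).1 ∈ ({La, Lb, Ra, Rb} : Set (Bool → List Bool))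
      simp only [Set.mem_insert_iff, Set.mem_singleton_iff]
      exact hF1 (g n)
    · intro n
      exact hF2 (g n)
  · rintro ⟨σ, ws, hS, h0, hA⟩
    by_contra hnb
    rw [← h0] at hnb
    obtain ⟨t₀, ht₀⟩ := Stmt3Aux.unbalWit_of_not_balanced hnb
    have key : ∀ n, ∃ t, Stmt3Aux.UnbalWit (ws n) t ∧ t.length + n ≤ t₀.length := by
      intro n
      induction n with
      | zero => exact ⟨t₀, ht₀, by omega⟩
      | succ m ih =>
          obtain ⟨t, ht, hle⟩ := ih
          have hmem' : σ m = La ∨ σ m = Lb ∨ σ m = Ra ∨ σ m = Rb := by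
            have := hS m
            simpa [Set.mem_insert_iff] using this
          obtain ⟨t', ht', hlt⟩ := Stmt3Aux.step_any hmem' (hA m) ht
          exact ⟨t', ht', by omega⟩
    obtain ⟨t, -, hle⟩ := key (t₀.length + 1)
    omega
end

section
/- Let w be a balanced infinite word over {a,b} starting with the letter a and containing no factor bb. Then w can be decomposed over {a, ab}, i.e., w = L_a(w') for some infinite word w', and w' is balanced. -/
/-!
A binary word is unbalanced exactly when it has factors `a t a` and `b t b` for some `t`: in a
shortest pair of equal-length factors whose `b`-counts differ by two, all proper prefixes and
suffixes differ by exactly one, which pins down the first and last letters and forces the middles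
to agree.

Since `w` starts with `a` and avoids `bb`, it cuts into blocks `a` and `ab`, so `w = L_a(w')`.
Every block begins with `a`, hence an image `L_a(u)` inside `w` is always followed by `a`; thus
factors `a t a`, `b t b` of `w'` give the factors `a s a`, `b s b` of `w` with `s = L_a(t) a`.
-/

universe u
variable {A : Type u}

def window (w : ℕ → A) (k n : ℕ) : List A := (List.range' k n).map w

@[simp]
theorem length_window (w : ℕ → A) (k n : ℕ) : (window w k n).length = n := by
  simp [window]

theorem window_add (w : ℕ → A) (k m n : ℕ) :
    window w k (m + n) = window w k m ++ window w (k + m) n := by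
  simp [window, ← List.range'_append_1]

section Factors

variable {w : ℕ → A} {u v : List A} {k : ℕ}

theorem factorAt_append_iff :
    FactorAt w (u ++ v) k ↔ FactorAt w u k ∧ FactorAt w v (k + u.length) := by
  refine ⟨fun h => ⟨fun i hi => ?_, fun i hi => ?_⟩, fun ⟨hu, hv⟩ i hi => ?_⟩
  · rw [← h i (by simp; omega), List.getElem_append_left hi]
  · rw [Nat.add_assoc, ← h (u.length + i) (by simp; omega), List.getElem_append_right (by omega)]
    simp
  · rcases lt_or_ge i u.length with hiu | hiu
    · rw [List.getElem_append_left hiu, hu i hiu]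
    · rw [List.getElem_append_right hiu, hv _ (by simp at hi; omega)]
      congr 1; omega

theorem factorAt_singleton_iff {x : A} : FactorAt w [x] k ↔ w k = x := by
  simp [FactorAt, eq_comm]

theorem factorAt_window (k n : ℕ) : FactorAt w (window w k n) k := by
  intro i hi
  simp [window]

theorem FactorAt.eq_window (h : FactorAt w u k) : u = window w k u.length :=
  List.ext_getElem (by simp [window]) fun i hi _ => by simp [window, h i hi]

end Factors

theorem count_window_succ (w : ℕ → Bool) (k n : ℕ) :
    (window w k (n + 1)).count true = (window w k n).count true + (w (k + n)).toNat := by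
  cases h : w (k + n) <;> simp [window, List.range'_concat, h]

theorem count_window_add (w : ℕ → Bool) (k m n : ℕ) :
    (window w k (m + n)).count true =
      (window w k m).count true + (window w (k + m) n).count true := by
  rw [window_add, List.count_append]

theorem count_window_le (w : ℕ → Bool) (k n : ℕ) : (window w k n).count true ≤ n :=
  List.count_le_length.trans (length_window w k n).le

theorem factorAt_cons_append_singleton_iff {w : ℕ → A} {x y : A} {t : List A} {k : ℕ} :
    FactorAt w (x :: (t ++ [y])) k ↔
      w k = x ∧ FactorAt w t (k + 1) ∧ w (k + 1 + t.length) = y := by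
  change FactorAt w ([x] ++ (t ++ [y])) k ↔ _
  simp only [factorAt_append_iff, factorAt_singleton_iff, List.length_singleton]

def UnbalancedPair (w : ℕ → Bool) (t : List Bool) : Prop :=
  Factor w (false :: (t ++ [false])) ∧ Factor w (true :: (t ++ [true]))

section Balance

variable {w : ℕ → Bool}

theorem UnbalancedPair.not_isBalanced {t : List Bool} (h : UnbalancedPair w t) :
    ¬ IsBalanced w := by
  intro hbal
  have := hbal true _ _ h.2 h.1 (by simp)
  simp [abs_le] at this
  omega

theorem exists_window_count_add_two_le (h : ¬ IsBalanced w) :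
    ∃ n k l, (window w l n).count true + 2 ≤ (window w k n).count true := by
  simp only [IsBalanced, not_forall] at h
  obtain ⟨c, u, v, ⟨k, hu⟩, ⟨l, hv⟩, hlen, habs⟩ := h
  have hu' := List.count_true_add_count_false u
  have hv' := List.count_true_add_count_false v
  rw [hu.eq_window] at habs hu'
  rw [hv.eq_window, ← hlen] at habs hv'
  rw [length_window] at hu' hv'
  refine ⟨u.length, ?_⟩
  rcases lt_abs.mp (not_le.mp habs) with h | h <;> cases c
  exacts [⟨l, k, by omega⟩, ⟨k, l, by omega⟩, ⟨k, l, by omega⟩, ⟨l, k, by omega⟩]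

theorem unbalancedPair_of_forall_count_window_le {n k l : ℕ}
    (hmin : ∀ j < n, ∀ k l, (window w k j).count true ≤ (window w l j).count true + 1)
    (h : (window w l n).count true + 2 ≤ (window w k n).count true) :
    UnbalancedPair w (window w (k + 1) (n - 2)) := by
  -- the prefix bound gives `≤`, the suffix bound `≥`
  have hinner : ∀ j, 0 < j → j < n →
      (window w k j).count true = (window w l j).count true + 1 := by
    intro j hj hjn
    have hsuf := hmin (n - j) (by omega) (k + j) (l + j)
    have hk := count_window_add w k j (n - j)
    have hl := count_window_add w l j (n - j)
    rw [Nat.add_sub_cancel' hjn.le] at hk hl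
    have := hmin j hjn k l
    omega
  obtain ⟨m, rfl⟩ : ∃ m, n = m + 2 := ⟨n - 2, by have := count_window_le w k n; omega⟩
  have hbit := Bool.toNat_lt
  have hinj : ∀ {a b : Bool}, a.toNat = b.toNat → a = b := by decide
  have hgap : ∀ {a b : Bool}, a.toNat = b.toNat + 1 → a = true ∧ b = false := by decide
  have hfirst : (w k).toNat = (w l).toNat + 1 := by
    have := hinner 1 (by omega) (by omega)
    rw [count_window_succ, count_window_succ] at this
    simpa [window] using this
  have hlast : (w (k + 1 + m)).toNat = (w (l + 1 + m)).toNat + 1 := by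
    have := hinner (m + 1) (by omega) (by omega)
    rw [count_window_succ w k (m + 1), count_window_succ w l (m + 1)] at h
    have e : ∀ i, i + (m + 1) = i + 1 + m := by omega
    rw [e, e] at h
    have := hbit (w (k + 1 + m)); have := hbit (w (l + 1 + m))
    omega
  have hmiddle : ∀ j < m, w (k + 1 + j) = w (l + 1 + j) := by
    intro j hj
    have h1 := hinner (j + 1) (by omega) (by omega)
    have h2 := hinner (j + 2) (by omega) (by omega)
    rw [count_window_succ w k (j + 1), count_window_succ w l (j + 1), h1] at h2
    rw [show k + (j + 1) = k + 1 + j by omega, show l + (j + 1) = l + 1 + j by omega] at h2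
    exact hinj (by omega)
  obtain ⟨hk, hl⟩ := hgap hfirst
  obtain ⟨hk', hl'⟩ := hgap hlast
  have ht : window w (k + 1) m = window w (l + 1) m :=
    List.ext_getElem (by simp) fun j hj _ => by simpa [window] using hmiddle j (by simpa using hj)
  rw [Nat.add_sub_cancel]
  refine ⟨⟨l, ?_⟩, ⟨k, ?_⟩⟩ <;> rw [factorAt_cons_append_singleton_iff, length_window]
  · exact ⟨hl, ht ▸ factorAt_window _ _, hl'⟩
  · exact ⟨hk, factorAt_window _ _, hk'⟩

theorem exists_unbalancedPair_of_not_isBalanced (h : ¬ IsBalanced w) :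
    ∃ t, UnbalancedPair w t := by
  classical
  have hex := exists_window_count_add_two_le h
  obtain ⟨k, l, hkl⟩ := Nat.find_spec hex
  refine ⟨_, unbalancedPair_of_forall_count_window_le (fun j hj k l => ?_) hkl⟩
  by_contra hlt
  exact Nat.find_min hex hj ⟨k, l, by omega⟩

theorem isBalanced_iff_forall_not_unbalancedPair :
    IsBalanced w ↔ ∀ t, ¬ UnbalancedPair w t := by
  refine ⟨fun hw t ht => ht.not_isBalanced hw, fun h => ?_⟩
  by_contra hw
  obtain ⟨t, ht⟩ := exists_unbalancedPair_of_not_isBalanced hw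
  exact h t ht

end Balance

theorem ApplyEq.factorAt_applyList_append {f : A → List A} {v u : ℕ → A} {c : A}
    (h : ApplyEq f v u) (hc : ∀ a, ∃ s, f a = c :: s) {x : List A} {k : ℕ}
    (hx : FactorAt v x k) : FactorAt u (applyList f x ++ [c]) (blockStart f v k) := by
  induction x generalizing k with
  | nil =>
    obtain ⟨s, hs⟩ := hc (v k)
    simpa [applyList, factorAt_singleton_iff, hs] using h k 0 (by simp [hs])
  | cons y x ih =>
    rw [← List.singleton_append, factorAt_append_iff, factorAt_singleton_iff] at hx
    obtain ⟨rfl, hx⟩ := hx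
    rw [applyList, List.flatMap_cons, List.append_assoc, factorAt_append_iff]
    exact ⟨fun i hi => (h k i hi).symm, ih hx⟩

theorem UnbalancedPair.of_applyEq_La {v w : ℕ → Bool} {t : List Bool} (h : ApplyEq La v w)
    (ht : UnbalancedPair v t) : UnbalancedPair w (applyList La t ++ [false]) := by
  obtain ⟨⟨k, hk⟩, ⟨l, hl⟩⟩ := ht
  have hc : ∀ a, ∃ s, La a = false :: s := by rintro (_ | _) <;> exact ⟨_, rfl⟩
  have hk' := h.factorAt_applyList_append hc hk
  have hl' := h.factorAt_applyList_append hc hl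
  refine ⟨⟨blockStart La v k, by simpa [applyList, La] using hk'⟩,
    ⟨blockStart La v l + 1, ?_⟩⟩
  have e : applyList La (true :: (t ++ [true])) ++ [false] =
      [false] ++ (true :: ((applyList La t ++ [false]) ++ [true])) ++ [false] := by
    simp [applyList, La]
  rw [e, factorAt_append_iff, factorAt_append_iff] at hl'
  exact hl'.1.2

section Desubstitution

variable (w : ℕ → Bool)

def laBlockStart : ℕ → ℕ
  | 0 => 0
  | n + 1 => laBlockStart n + (La (w (laBlockStart n + 1))).length

def desubstLa (n : ℕ) : Bool := w (laBlockStart w n + 1)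

theorem blockStart_La_desubstLa (n : ℕ) : blockStart La (desubstLa w) n = laBlockStart w n := by
  induction n with
  | zero => rfl
  | succ n ih => simp [blockStart, laBlockStart, ih, desubstLa]

variable {w}

theorem apply_laBlockStart_eq_false (h0 : w 0 = false) (hbb : ¬ Factor w [true, true]) (n : ℕ) :
    w (laBlockStart w n) = false := by
  induction n with
  | zero => exact h0
  | succ n ih =>
    cases hb : w (laBlockStart w n + 1)
    · simp [laBlockStart, hb, La]
    · refine Bool.eq_false_iff.mpr fun hc => hbb ⟨laBlockStart w n + 1, ?_⟩
      rw [← List.singleton_append, factorAt_append_iff, factorAt_singleton_iff,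
        factorAt_singleton_iff]
      simp_all [laBlockStart, La]

theorem applyEq_La_desubstLa (h0 : w 0 = false) (hbb : ¬ Factor w [true, true]) :
    ApplyEq La (desubstLa w) w := by
  intro n i hi
  rw [blockStart_La_desubstLa]
  have := apply_laBlockStart_eq_false h0 hbb n
  unfold desubstLa at hi ⊢
  revert hi
  cases hb : w (laBlockStart w n + 1) <;> intro hi
  · obtain rfl : i = 0 := by simpa [La] using hi
    simpa [La]
  · obtain rfl | rfl : i = 0 ∨ i = 1 := by simp [La] at hi; omega
    · simpa [La]
    · simpa [La]

end Desubstitution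

/-- a balanced binary word starting with `a` with no factor `bb`
decomposes over `{a, ab}` and the desubstituted word is balanced. -/
theorem stmt4 (w : ℕ → Bool) (hbal : IsBalanced w) (h0 : w 0 = false)
    (hbb : ¬ Factor w [true, true]) :
    ∃ w' : ℕ → Bool, ApplyEq La w' w ∧ IsBalanced w' := by
  have hw := applyEq_La_desubstLa h0 hbb
  refine ⟨desubstLa w, hw, ?_⟩
  rw [isBalanced_iff_forall_not_unbalancedPair] at hbal ⊢
  exact fun t ht => hbal _ (ht.of_applyEq_La hw)
end

section
/- If an infinite binary word w over {a,b} can be indefinitely desubstituted using only the substitutions L_a and R_a (i.e., it has a directive sequence in {L_a, R_a}^ω), then w contains at most one occurrence of the letter b; that is, w = a^ω or w = a^n b a^ω for some n ≥ 0. -/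
universe u
variable {A : Type u}

section Aux
variable {f : Bool → List Bool} {v : ℕ → Bool}

lemma hlen_pos (hf : f = La ∨ f = Ra) (x : Bool) : 0 < (f x).length := by
  rcases hf with rfl | rfl <;> cases x <;> simp [La, Ra]

lemma hlen_true (hf : f = La ∨ f = Ra) : (f true).length = 2 := by
  rcases hf with rfl | rfl <;> simp [La, Ra]

lemma blockStart_ge (hf : f = La ∨ f = Ra) : ∀ n, n ≤ blockStart f v n := by
  intro n
  induction n with
  | zero => exact Nat.le_refl 0
  | succ n ih =>
      have h2 := hlen_pos (f := f) hf (v n)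
      simp only [blockStart]
      omega

lemma blockStart_mono {p q : ℕ} (h : p ≤ q) :
    blockStart f v p ≤ blockStart f v q := by
  induction h with
  | refl => exact le_refl _
  | step h ih =>
      calc blockStart f v p ≤ _ := ih
        _ ≤ _ := Nat.le_add_right _ _

lemma blockStart_lower (hf : f = La ∨ f = Ra) (p : ℕ) (hp : v p = true) :
    ∀ q, p < q → q + 1 ≤ blockStart f v q := by
  intro q hq
  induction q with
  | zero => omega
  | succ q ih =>
      have h1 := blockStart_ge (v := v) hf q
      have h2 := hlen_pos (f := f) hf (v q)
      rcases Nat.lt_succ_iff_lt_or_eq.mp hq with h | h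
      · have := ih h
        simp only [blockStart]; omega
      · subst h
        simp only [blockStart, hp, hlen_true hf]; omega

lemma exists_block (hf : f = La ∨ f = Ra) :
    ∀ m, ∃ n i, ∃ _ : i < (f (v n)).length, m = blockStart f v n + i := by
  intro m
  induction m with
  | zero => exact ⟨0, 0, hlen_pos hf _, by simp [blockStart]⟩
  | succ m ih =>
      obtain ⟨n, i, hi, rfl⟩ := ih
      by_cases h : i + 1 < (f (v n)).length
      · exact ⟨n, i + 1, h, by omega⟩
      · exact ⟨n + 1, 0, hlen_pos hf _, by simp only [blockStart]; omega⟩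

lemma block_letter (hf : f = La ∨ f = Ra) (x : Bool) (i : ℕ) (hi : i < (f x).length)
    (h : (f x)[i] = true) : x = true := by
  rcases hf with rfl | rfl <;> cases x <;> simp_all [La, Ra]

lemma block_unique (hf : f = La ∨ f = Ra) (x : Bool) (i j : ℕ)
    (hi : i < (f x).length) (hj : j < (f x).length)
    (h1 : (f x)[i] = true) (h2 : (f x)[j] = true) : i = j := by
  rcases hf with rfl | rfl <;> cases x <;>
    simp only [La, Ra, List.length_cons, List.length_nil] at hi hj <;>
    interval_cases i <;> interval_cases j <;> simp_all [La, Ra]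

lemma descend {u : ℕ → Bool} (hf : f = La ∨ f = Ra) (hw : ApplyEq f v u)
    (m₀ m : ℕ) (h0 : m₀ < m) (hb0 : u m₀ = true) (hb : u m = true) :
    ∃ p p', p < p' ∧ p' < m ∧ v p = true ∧ v p' = true := by
  obtain ⟨p, i, hi, hm0⟩ := exists_block (v := v) hf m₀
  obtain ⟨p', i', hi', hm⟩ := exists_block (v := v) hf m
  have e0 : (f (v p))[i] = true := by rw [← hw p i hi, ← hm0]; exact hb0
  have e1 : (f (v p'))[i'] = true := by rw [← hw p' i' hi', ← hm]; exact hb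
  have hvp : v p = true := block_letter hf _ _ hi e0
  have hvp' : v p' = true := block_letter hf _ _ hi' e1
  have hpp' : p < p' := by
    rcases lt_trichotomy p p' with h | h | h
    · exact h
    · exfalso; subst h
      have : i = i' := block_unique hf _ _ _ hi hi' e0 e1
      omega
    · exfalso
      have h1 : blockStart f v p' + (f (v p')).length ≤ blockStart f v p := by
        have := blockStart_mono (f := f) (v := v) (Nat.succ_le_of_lt h)
        simpa [blockStart] using this
      omega
  have h2 : p' + 1 ≤ blockStart f v p' := blockStart_lower hf p hvp p' hpp'
  exact ⟨p, p', hpp', by omega, hvp, hvp'⟩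

end Aux

/-- a word with a directive sequence in `{L_a, R_a}^ω` contains at most
one occurrence of `b`: it is `a^ω` or `a^n b a^ω`. -/
theorem stmt5 (w : ℕ → Bool) (h : InStable ({La, Ra} : Set (Bool → List Bool)) w) :
    (∀ i, w i = false) ∨ ∃ n : ℕ, ∀ i, w i = if i = n then true else false := by
  obtain ⟨σ, ws, hS, hw0, happ⟩ := h
  have key : ∀ m n m₀, m₀ < m → ws n m₀ = true → ws n m = true → False := by
    intro m
    induction m using Nat.strong_induction_on with
    | _ m ih =>
      intro n m₀ h0 hb0 hb
      have hf : σ n = La ∨ σ n = Ra := by simpa using hS n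
      obtain ⟨p, p', hpp', hp'm, hvp, hvp'⟩ := descend hf (happ n) m₀ m h0 hb0 hb
      exact ih p' hp'm (n + 1) p hpp' hvp hvp'
  by_cases hall : ∀ i, w i = false
  · exact Or.inl hall
  · push_neg at hall
    obtain ⟨n, hn⟩ := hall
    have hn' : w n = true := by simpa using hn
    refine Or.inr ⟨n, fun i => ?_⟩
    by_cases hin : i = n
    · simp [hin, hn']
    · simp only [hin, if_false]
      by_contra h2
      have hi' : w i = true := by simpa using h2
      subst hw0
      rcases Nat.lt_or_ge i n with h | h
      · exact key n 0 i h hi' hn'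
      · exact key i 0 n (lt_of_le_of_ne h (Ne.symm hin)) hn' hi'
end

section
/- Let S be a set of substitutions on a finite alphabet A and s a sequence in S^ω. The set StabUltLet(s) is finite, with cardinality at most the cardinality of A. Moreover there exist a finite prefix p of s and the corresponding suffix s' such that every element u of StabUltLet(s) can be written u = p(α) for some letter α ∈ StabLet(s'). -/
universe u
variable {A : Type u}

/-- Finite nonempty words indefinitely desubstitutable with directive sequence `s`. -/
def StabFin (s : ℕ → A → List A) : Set (List A) :=
  {u | ∃ us : ℕ → List A, us 0 = u ∧ (∀ n, us n ≠ []) ∧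
    ∀ n, us n = applyList (s n) (us (n + 1))}

/-- Nonempty concatenations of elements of `X`. -/
def WPlus (X : Set (List A)) : Set (List A) :=
  {u | ∃ L : List (List A), L ≠ [] ∧ (∀ x ∈ L, x ∈ X) ∧ u = L.flatten}

/-- Elements of `StabFin s` that are not concatenations of two or more
elements of `StabFin s`. -/
def GenStabFin (s : ℕ → A → List A) : Set (List A) :=
  StabFin s \ {u | ∃ x y, x ∈ StabFin s ∧ y ∈ WPlus (StabFin s) ∧ u = x ++ y}

/-- Letters indefinitely desubstitutable along `s`. -/
def StabLet (s : ℕ → A → List A) : Set A :=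
  {α | ∃ as : ℕ → A, as 0 = α ∧ ∀ n, s n (as (n + 1)) = [as n]}

/-- Words of the form `σ_1⋯σ_k(α)` with `α` indefinitely desubstitutable along the
remaining suffix of `s`. -/
def StabUltLet (s : ℕ → A → List A) : Set (List A) :=
  {u | ∃ (k : ℕ) (α : A), α ∈ StabLet (fun n => s (n + k)) ∧ u = compSeq s k α}

/-! Write `U k = compSeq s k '' StabLet (fun n => s (n + k))`, so that `StabUltLet s = ⋃ k, U k`.
A stable letter `α` of the `k`-th suffix comes from a stable letter `β` of the next suffix with
`s k β = [α]`, whence `σ_1⋯σ_k(α) = σ_1⋯σ_{k+1}(β)` and `U k ⊆ U (k + 1)`. Each `U k` has at most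
`#A` elements, so this chain becomes stationary, and its final term is all of `StabUltLet s`. -/

lemma exists_stabLet_tail_of_mem_stabLet (s : ℕ → A → List A) {α : A} (hα : α ∈ StabLet s) :
    ∃ β ∈ StabLet (fun n => s (n + 1)), s 0 β = [α] := by
  obtain ⟨as, rfl, has⟩ := hα
  exact ⟨as 1, ⟨fun n => as (n + 1), rfl, fun n => has (n + 1)⟩, has 0⟩

lemma compSeq_succ_of_eq_singleton (s : ℕ → A → List A) {k : ℕ} {α β : A}
    (h : s k β = [α]) : compSeq s (k + 1) β = compSeq s k α := by
  simp [compSeq, applyList, h]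

lemma image_compSeq_stabLet_mono (s : ℕ → A → List A) :
    Monotone fun k => compSeq s k '' StabLet (fun n => s (n + k)) := by
  refine monotone_nat_of_le_succ fun k => ?_
  rintro _ ⟨α, hα, rfl⟩
  obtain ⟨β, hβ, hβα⟩ := exists_stabLet_tail_of_mem_stabLet _ hα
  refine ⟨β, ?_, compSeq_succ_of_eq_singleton s (by simpa using hβα)⟩
  simpa only [Nat.add_right_comm, Nat.add_assoc] using hβ

lemma stabUltLet_eq_iUnion (s : ℕ → A → List A) :
    StabUltLet s = ⋃ k, compSeq s k '' StabLet (fun n => s (n + k)) := by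
  ext u
  simp only [StabUltLet, Set.mem_iUnion, Set.mem_image, Set.mem_ofPred_eq, eq_comm]

lemma Set.exists_forall_subset_of_monotone_of_ncard_le {α : Type*} {U : ℕ → Set α}
    (hU : Monotone U) (hfin : ∀ k, (U k).Finite) {N : ℕ} (hN : ∀ k, (U k).ncard ≤ N) :
    ∃ k, ∀ m, U m ⊆ U k := by
  have hbdd : BddAbove (Set.range fun k => (U k).ncard) :=
    ⟨N, by rintro _ ⟨k, rfl⟩; exact hN k⟩
  obtain ⟨k, hk⟩ := Nat.sSup_mem (Set.range_nonempty _) hbdd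
  refine ⟨k, fun m => ?_⟩
  have hmax : (U (max m k)).ncard ≤ (U k).ncard :=
    (le_csSup hbdd ⟨max m k, rfl⟩).trans_eq hk.symm
  rw [Set.eq_of_subset_of_ncard_le (hU (le_max_right m k)) hmax (hfin _)]
  exact hU (le_max_left m k)

theorem stmt8_general {A : Type u} [Fintype A] (s : ℕ → A → List A) :
    (StabUltLet s).Finite ∧ (StabUltLet s).ncard ≤ Fintype.card A ∧
      ∃ k : ℕ, ∀ u ∈ StabUltLet s,
        ∃ α ∈ StabLet (fun n => s (n + k)), u = compSeq s k α := by
  set U : ℕ → Set (List A) := fun k => compSeq s k '' StabLet (fun n => s (n + k))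
  have hcard : ∀ k, (U k).ncard ≤ Fintype.card A := fun k =>
    (Set.ncard_image_le (Set.toFinite _)).trans
      ((Set.ncard_le_card _).trans Nat.card_eq_fintype_card.le)
  obtain ⟨k, hk⟩ := Set.exists_forall_subset_of_monotone_of_ncard_le
    (image_compSeq_stabLet_mono s) (fun k => Set.toFinite (U k)) hcard
  have hstab : StabUltLet s = U k :=
    (stabUltLet_eq_iUnion s).trans (subset_antisymm (Set.iUnion_subset hk) (Set.subset_iUnion U k))
  refine ⟨hstab ▸ Set.toFinite _, hstab ▸ hcard k, k, ?_⟩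
  rintro u hu
  obtain ⟨α, hα, rfl⟩ := hstab ▸ hu
  exact ⟨α, hα, rfl⟩

/-- `StabUltLet(s)` is finite, of cardinality at most `#A`; moreover a
single prefix `p` of `s` works for all of its elements. -/
theorem stmt8 {A : Type u} [Fintype A] (S : Set (A → List A))
    (hS : ∀ f ∈ S, ∀ a, f a ≠ []) (s : ℕ → A → List A) (hs : ∀ n, s n ∈ S) :
    (StabUltLet s).Finite ∧ (StabUltLet s).ncard ≤ Fintype.card A ∧
      ∃ k : ℕ, ∀ u ∈ StabUltLet s,
        ∃ α ∈ StabLet (fun n => s (n + k)), u = compSeq s k α :=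
  stmt8_general s
end

section
/- For every i ≥ 0, every composition f of i morphisms from {L_a, L_b, R_a, R_b} (over the alphabet {a,b}) and every infinite word w: if f(w) contains a factor b a^{j+2} b for some j ≥ i, then f is a composition of morphisms from {L_a, R_a} only. -/
universe u
variable {A : Type u}

/-- Composition of a list of substitutions (`compList [σ₁, σ₂] = σ₁ ∘ σ₂`). -/
def compList (l : List (Bool → List Bool)) : Bool → List Bool :=
  l.foldr (fun f g a => applyList f (g a)) fun a => [a]

/-! The substitutions `L_a` and `R_a` are conjugate (`L_a(y) a = a R_a(y)`), and so are `L_b`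
and `R_b`. Neither `L_b` nor `R_b` can create the factor `aa`, while `L_a` and `R_a` turn a factor
`b a^k b` of the preimage into `b a^(k+1) b` and create no other such factor. Hence a factor
`b a^k b` of `f(x)` with `k` larger than the number of substitutions composed in `f` can be traced
back through every one of them, and each must be `L_a` or `R_a`. For an infinite word `u = f(w)`
it suffices to look at the image of a long enough prefix of `w`, as no substitution erases a
letter. -/

lemma applyList_ne_nil {f : A → List A} (hf : ∀ a, f a ≠ []) {x : List A} (hx : x ≠ []) :
    applyList f x ≠ [] := by
  obtain ⟨a, ha⟩ := List.exists_mem_of_ne_nil x hx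
  simpa [applyList, List.flatMap_eq_nil_iff] using ⟨a, ha, hf a⟩

lemma le_blockStart {f : A → List A} (hf : ∀ a, f a ≠ []) (v : ℕ → A) (n : ℕ) :
    n ≤ blockStart f v n := by
  induction n with
  | zero => exact le_rfl
  | succ n ih =>
    have := List.length_pos_of_ne_nil (hf (v n))
    simp only [blockStart]
    omega

lemma ApplyEq.applyList_map_range {f : A → List A} {v u : ℕ → A} (h : ApplyEq f v u) (n : ℕ) :
    applyList f ((List.range n).map v) = (List.range (blockStart f v n)).map u := by
  induction n with
  | zero => rfl
  | succ n ih =>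
    rw [List.range_succ, List.map_append, applyList, List.flatMap_append, ← applyList, ih,
      blockStart, List.range_add, List.map_append, List.map_map]
    congr 1
    refine List.ext_getElem (by simp) fun i _ hi => ?_
    simp [h n i (by simpa using hi)]

lemma FactorAt.infix_map_range {u : ℕ → A} {p : List A} {k m : ℕ} (h : FactorAt u p k)
    (hm : k + p.length ≤ m) : p <:+: (List.range m).map u := by
  obtain ⟨r, rfl⟩ := Nat.exists_eq_add_of_le hm
  have hp : (List.range p.length).map (fun i => u (k + i)) = p :=
    List.ext_getElem (by simp) fun i _ hi => by simp [h i hi]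
  rw [List.range_add, List.range_add, List.map_append, List.map_append, List.map_map,
    Function.comp_def, hp]
  exact List.infix_append _ _ _

lemma ApplyEq.exists_infix_applyList {f : A → List A} {v u : ℕ → A} (h : ApplyEq f v u)
    (hf : ∀ a, f a ≠ []) {p : List A} (hp : Factor u p) : ∃ x, p <:+: applyList f x := by
  obtain ⟨k, hk⟩ := hp
  refine ⟨(List.range (k + p.length)).map v, ?_⟩
  rw [h.applyList_map_range]
  exact hk.infix_map_range (le_blockStart hf v _)

lemma infix_of_infix_cons {a b : A} {p l : List A} (h : b :: p <:+: a :: l) (hba : b ≠ a) :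
    b :: p <:+: l :=
  (List.infix_cons_iff.mp h).resolve_left fun hp => hba (List.cons_prefix_cons.mp hp).1

lemma applyList_compList_cons (g : Bool → List Bool) (l : List (Bool → List Bool))
    (x : List Bool) :
    applyList (compList (g :: l)) x = applyList g (applyList (compList l) x) := by
  simp only [applyList, List.flatMap_assoc]
  rfl

lemma compList_ne_nil {l : List (Bool → List Bool)} (hl : ∀ g ∈ l, ∀ a, g a ≠ []) (a : Bool) :
    compList l a ≠ [] := by
  induction l with
  | nil => simp [compList]
  | cons g l ih =>
    exact applyList_ne_nil (hl g List.mem_cons_self)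
      (ih fun g' hg' => hl g' (List.mem_cons_of_mem g hg'))

lemma ne_nil_of_mem_La_Lb_Ra_Rb {g : Bool → List Bool}
    (hg : g ∈ ({La, Lb, Ra, Rb} : Set (Bool → List Bool))) (a : Bool) : g a ≠ [] := by
  rcases hg with rfl | rfl | rfl | rfl <;> cases a <;> simp [La, Lb, Ra, Rb]

lemma applyList_La_append_false (y : List Bool) :
    applyList La y ++ [false] = false :: applyList Ra y := by
  induction y with
  | nil => rfl
  | cons c y ih =>
    simp only [applyList, List.flatMap_cons] at ih ⊢
    cases c <;> simp [La, Ra, ih]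

lemma applyList_Lb_append_true (y : List Bool) :
    applyList Lb y ++ [true] = true :: applyList Rb y := by
  induction y with
  | nil => rfl
  | cons c y ih =>
    simp only [applyList, List.flatMap_cons] at ih ⊢
    cases c <;> simp [Lb, Rb, ih]

lemma not_aa_infix_applyList_Rb (y : List Bool) : ¬ [false, false] <:+: applyList Rb y := by
  induction y with
  | nil => simp [applyList]
  | cons c y ih =>
    cases c <;> simp [applyList, Rb, List.infix_cons_iff] at ih ⊢ <;> exact ih

lemma not_aa_infix_applyList_Lb (y : List Bool) : ¬ [false, false] <:+: applyList Lb y := by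
  intro h
  have h' : [false, false] <:+: true :: applyList Rb y := by
    rw [← applyList_Lb_append_true]
    exact h.trans (List.prefix_append _ _).isInfix
  exact not_aa_infix_applyList_Rb y (infix_of_infix_cons h' Bool.false_ne_true)

def baPowB (k : ℕ) : List Bool := true :: List.replicate k false ++ [true]

lemma aa_infix_baPowB {k : ℕ} (hk : 2 ≤ k) : [false, false] <:+: baPowB k := by
  obtain ⟨k, rfl⟩ := Nat.exists_eq_add_of_le' hk
  exact ⟨[true], List.replicate k false ++ [true], by simp [baPowB, List.replicate_succ]⟩

lemma replicate_prefix_of_prefix_applyList_Ra {k : ℕ} {y : List Bool}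
    (h : List.replicate k false ++ [true] <+: applyList Ra y) :
    List.replicate k false ++ [true] <+: y := by
  induction k generalizing y with
  | zero =>
    cases y with
    | nil => simp [applyList] at h
    | cons c y => cases c <;> simp_all [applyList, Ra]
  | succ k ih =>
    cases y with
    | nil => simp [applyList] at h
    | cons c y => cases c <;> simp_all [applyList, Ra, List.replicate_succ]

lemma baPowB_infix_of_infix_applyList_Ra {k : ℕ} {y : List Bool}
    (h : baPowB (k + 1) <:+: applyList Ra y) : baPowB k <:+: y := by
  induction y with
  | nil => simp [applyList, baPowB] at h
  | cons c y ih =>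
    cases c
    · have h' : baPowB (k + 1) <:+: false :: applyList Ra y := h
      exact (ih (infix_of_infix_cons h' (by decide))).trans (List.suffix_cons _ _).isInfix
    · have h' : baPowB (k + 1) <:+: true :: false :: applyList Ra y := h
      rcases List.infix_cons_iff.mp h' with hp | h'
      · have hy := replicate_prefix_of_prefix_applyList_Ra (k := k) (y := y)
          (by simpa [baPowB, List.replicate_succ] using hp)
        exact (List.prefix_cons_inj true).mpr hy |>.isInfix
      · exact (ih (infix_of_infix_cons h' (by decide))).trans (List.suffix_cons _ _).isInfix

lemma baPowB_infix_of_infix_applyList_La {k : ℕ} {y : List Bool}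
    (h : baPowB (k + 1) <:+: applyList La y) : baPowB k <:+: y := by
  have h' : baPowB (k + 1) <:+: false :: applyList Ra y := by
    rw [← applyList_La_append_false]
    exact h.trans (List.prefix_append _ _).isInfix
  exact baPowB_infix_of_infix_applyList_Ra (infix_of_infix_cons h' (by decide))

theorem mem_La_Ra_of_baPowB_infix_applyList_compList {l : List (Bool → List Bool)}
    (hl : ∀ g ∈ l, g ∈ ({La, Lb, Ra, Rb} : Set (Bool → List Bool))) {k : ℕ} (hk : l.length < k)
    {x : List Bool} (h : baPowB k <:+: applyList (compList l) x) :
    ∀ g ∈ l, g = La ∨ g = Ra := by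
  induction l generalizing k with
  | nil => simp
  | cons g l ih =>
    obtain ⟨k, rfl⟩ : ∃ k', k = k' + 1 := Nat.exists_eq_add_one.mpr (by omega)
    rw [applyList_compList_cons] at h
    have hg : g = La ∨ g = Ra := by
      have haa := (aa_infix_baPowB (by simp at hk; omega)).trans h
      rcases hl g List.mem_cons_self with rfl | rfl | rfl | rfl
      · exact .inl rfl
      · exact (not_aa_infix_applyList_Lb _ haa).elim
      · exact .inr rfl
      · exact (not_aa_infix_applyList_Rb _ haa).elim
    have hy : baPowB k <:+: applyList (compList l) x := by
      rcases hg with rfl | rfl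
      · exact baPowB_infix_of_infix_applyList_La h
      · exact baPowB_infix_of_infix_applyList_Ra h
    intro g' hg'
    rcases List.mem_cons.mp hg' with rfl | hg'
    · exact hg
    · exact ih (fun g'' hg'' => hl g'' (List.mem_cons_of_mem g hg'')) (by simp at hk; omega) hy
        g' hg'

/-- if a composition `f` of `i` morphisms from `{L_a, L_b, R_a, R_b}`
is such that `f(w)` contains a factor `b a^{j+2} b` with `j ≥ i`, then all the
morphisms composed are in `{L_a, R_a}`. -/
theorem stmt15 (l : List (Bool → List Bool))
    (hl : ∀ g ∈ l, g ∈ ({La, Lb, Ra, Rb} : Set (Bool → List Bool)))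
    (j : ℕ) (hj : l.length ≤ j) (w u : ℕ → Bool) (hu : ApplyEq (compList l) w u)
    (hfac : Factor u ([true] ++ List.replicate (j + 2) false ++ [true])) :
    ∀ g ∈ l, g = La ∨ g = Ra := by
  have hne := compList_ne_nil fun g hg => ne_nil_of_mem_La_Lb_Ra_Rb (hl g hg)
  obtain ⟨x, hx⟩ := hu.exists_infix_applyList hne hfac
  exact mem_La_Ra_of_baPowB_infix_applyList_compList hl (k := j + 2) (by omega) hx
end
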